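/- arXiv:2507.15034 — 3 statements merged into one kernel-verified Lean document; each statement's English description precedes it below -/
import Mathlib

section
/- For 0 < z < 1 and any two indices k, l of positive integers, the product of multi-polylogarithms satisfies the shuffle relation Li(k;z)·Li(l;z) = Li(k ш l;z), where k ш l denotes the shuffle product of the words e_1e_0^{k_1−1}⋯ and e_1e_0^{l_1−1}⋯ in the non-commutative polynomial algebra Q⟨e_0,e_1⟩, and Li is extended Q-linearly to words in e_1·Q⟨e_0,e_1⟩. -/
open scoped BigOperators

namespace MZVPaper

/-- Strictly increasing tuples of positive integers of length `r`. -/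
def Incr (r : ℕ) : Type := {m : Fin r → ℕ // StrictMono m ∧ ∀ i, 0 < m i}

/-- Multi-polylogarithm for a `Fin r`-indexed index. -/
noncomputable def LiF {r : ℕ} (k : Fin r → ℕ) (z : ℝ) : ℝ :=
  ∑' m : Incr r,
    (if h : 0 < r then z ^ (m.1 ⟨r - 1, Nat.sub_lt h Nat.one_pos⟩) else 1) /
      ∏ i, (m.1 i : ℝ) ^ k i

/-- Multi-polylogarithm for a list index. -/
noncomputable def LiL (k : List ℕ) (z : ℝ) : ℝ := LiF (fun i => k.get i) z

/-- Multiple zeta value of a list index. -/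
noncomputable def mzvL (k : List ℕ) : ℝ :=
  ∑' m : Incr k.length, 1 / ∏ i, (m.1 i : ℝ) ^ k.get i

/-- The word `e₁ e₀^{k₁-1} ⋯ e₁ e₀^{k_r-1}` of an index, `true = e₁`, `false = e₀`. -/
def word (k : List ℕ) : List Bool := k.flatMap (fun ki => true :: List.replicate (ki - 1) false)

def toIndexAux (w : List Bool) : ℕ × List ℕ :=
  w.foldr (fun b p => if b then (0, (p.1 + 1) :: p.2) else (p.1 + 1, p.2)) (0, [])

/-- The index of a word in `e₁·Q⟨e₀,e₁⟩`. -/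
def toIndex (w : List Bool) : List ℕ := (toIndexAux w).2

/-- Shuffle product of two words, as the list of shuffles (with multiplicity). -/
def sh : List Bool → List Bool → List (List Bool)
  | [], w => [w]
  | v, [] => [v]
  | a :: v, b :: w => ((sh v (b :: w)).map (a :: ·)) ++ ((sh (a :: v) w).map (b :: ·))
  termination_by v w => v.length + w.length
  decreasing_by all_goals simp +arith +decide

/-- Dual index: reverse the word and exchange `e₀ ↔ e₁`. -/
def dualIdx (k : List ℕ) : List ℕ := toIndex (((word k).reverse).map (fun b => !b))

/-- `k₊`: add 1 to the last entry. -/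
def plusIdx (k : List ℕ) : List ℕ := k.dropLast ++ [(k.getLast?.getD 0) + 1]

/-- `b(l;e) = ∏ C(lᵢ+eᵢ-1, eᵢ)`. -/
noncomputable def bcoef (l : List ℕ) (e : Fin l.length → ℕ) : ℝ :=
  ∏ i, (Nat.choose (l.get i + e i - 1) (e i) : ℝ)

/-- Componentwise sum `l + e` as a list. -/
def addIdx (l : List ℕ) (e : Fin l.length → ℕ) : List ℕ := List.ofFn fun i => l.get i + e i

/-- Arakawa–Kaneko zeta function. -/
noncomputable def xiL (k : List ℕ) (s : ℂ) : ℂ :=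
  (1 / Complex.Gamma s) *
    ∫ t in Set.Ioi (0 : ℝ),
      (LiL k (1 - Real.exp (-t)) : ℂ) * (t : ℂ) ^ (s - 1) / ((Real.exp t : ℂ) - 1)

/-- Euler–Zagier type multiple zeta function `ζ(k₁,…,k_r;s)`. -/
noncomputable def ezZeta (k : List ℕ) (s : ℂ) : ℂ :=
  ∑' m : Incr (k.length + 1),
    1 / ((∏ i : Fin k.length, (m.1 i.castSucc : ℂ) ^ k.get i) *
      (m.1 (Fin.last k.length) : ℂ) ^ s)

/-- Generalized binomial coefficient `C(s+d-1, d)`. -/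
noncomputable def genBinom (s : ℂ) (d : ℕ) : ℂ :=
  (∏ i ∈ Finset.range d, (s + (d : ℂ) - 1 - (i : ℂ))) / (d.factorial : ℂ)

/-- Strictly increasing tuples with the parity condition `mᵢ ≡ i (mod 2)` (1-based). -/
def IncrOdd (r : ℕ) : Type :=
  {m : Fin r → ℕ // StrictMono m ∧ ∀ i : Fin r, m i % 2 = (i.1 + 1) % 2}

/-- Level-2 multi-polylogarithm `A(k;z)`. -/
noncomputable def AF (k : List ℕ) (z : ℝ) : ℝ :=
  2 ^ k.length * ∑' m : IncrOdd k.length,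
    (if h : 0 < k.length then z ^ (m.1 ⟨k.length - 1, Nat.sub_lt h Nat.one_pos⟩) else 1) /
      ∏ i, (m.1 i : ℝ) ^ k.get i

open MeasureTheory intervalIntegral Set

/-! ### Word combinatorics -/

lemma word_cons (k : ℕ) (t : List ℕ) :
    word (k :: t) = true :: (List.replicate (k - 1) false ++ word t) := by
  simp [word]

lemma getLast?_cons_ne (a : Bool) {l : List Bool} (h : l ≠ []) :
    (a :: l).getLast? = l.getLast? := by
  cases l with
  | nil => exact absurd rfl h
  | cons b t => exact List.getLast?_cons_cons

lemma toIndexAux_invariant (w : List Bool) :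
    List.replicate (toIndexAux w).1 false ++ word (toIndexAux w).2 = w := by
  induction w with
  | nil => rfl
  | cons b w ih =>
    cases b with
    | false =>
      simp only [toIndexAux, List.foldr_cons, if_neg Bool.false_ne_true]
      show List.replicate ((toIndexAux w).1 + 1) false ++ word (toIndexAux w).2 = false :: w
      rw [List.replicate_succ, List.cons_append, ih]
    | true =>
      simp only [toIndexAux, List.foldr_cons, if_pos rfl]
      show List.replicate 0 false ++ word (((toIndexAux w).1 + 1) :: (toIndexAux w).2) = true :: w
      rw [List.replicate, List.nil_append, word_cons, Nat.add_sub_cancel, ih]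

lemma toIndexAux_pos (w : List Bool) : ∀ x ∈ (toIndexAux w).2, 0 < x := by
  induction w with
  | nil => simp [toIndexAux]
  | cons b w ih =>
    cases b with
    | false =>
      simpa only [toIndexAux, List.foldr_cons, if_neg Bool.false_ne_true] using ih
    | true =>
      simp only [toIndexAux, List.foldr_cons, if_pos rfl]
      intro x hx
      rcases List.mem_cons.1 hx with h | h
      · omega
      · exact ih x h

lemma toIndex_pos (w : List Bool) : ∀ x ∈ toIndex w, 0 < x := toIndexAux_pos w

lemma word_toIndex (w : List Bool) (h : w = [] ∨ w.head? = some true) :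
    word (toIndex w) = w := by
  have key := toIndexAux_invariant w
  rcases h with rfl | h
  · rfl
  · have h1 : (toIndexAux w).1 = 0 := by
      by_contra hc
      rcases Nat.exists_eq_succ_of_ne_zero hc with ⟨n, hn⟩
      rw [hn, List.replicate_succ] at key
      rw [← key] at h
      simp at h
    rw [h1] at key
    simpa [toIndex] using key

/-! ### Shuffle combinatorics -/

lemma sh_nil_left (w : List Bool) : sh [] w = [w] := by
  cases w <;> simp [sh]

lemma sh_nil_right (v : List Bool) : sh v [] = [v] := by
  cases v <;> simp [sh]

lemma sh_cons_cons (a b : Bool) (v w : List Bool) :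
    sh (a :: v) (b :: w) =
      ((sh v (b :: w)).map (a :: ·)) ++ ((sh (a :: v) w).map (b :: ·)) := by
  simp [sh]

lemma sh_length {v w u : List Bool} (h : u ∈ sh v w) : u.length = v.length + w.length := by
  induction v, w using sh.induct generalizing u with
  | case1 w => rw [sh_nil_left] at h; simp at h; simp [h]
  | case2 v _ => rw [sh_nil_right] at h; simp at h; simp [h]
  | case3 a v b w ih1 ih2 =>
    rw [sh_cons_cons] at h
    rcases List.mem_append.1 h with h | h <;> rcases List.mem_map.1 h with ⟨x, hx, rfl⟩
    · simp [ih1 hx]; omega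
    · simp [ih2 hx]; omega

lemma sh_head {v w u : List Bool} (h : u ∈ sh v w) :
    u.head? = v.head? ∨ u.head? = w.head? := by
  rcases v with _ | ⟨a, v⟩
  · rw [sh_nil_left] at h; simp at h; simp [h]
  rcases w with _ | ⟨b, w⟩
  · rw [sh_nil_right] at h; simp at h; simp [h]
  rw [sh_cons_cons] at h
  rcases List.mem_append.1 h with h | h <;> rcases List.mem_map.1 h with ⟨x, hx, rfl⟩
  · left; rfl
  · right; rfl

lemma sh_getLast {v w u : List Bool} (h : u ∈ sh v w) :
    (u = [] ∧ v = [] ∧ w = []) ∨ u.getLast? = v.getLast? ∨ u.getLast? = w.getLast? := by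
  induction v, w using sh.induct generalizing u with
  | case1 w => rw [sh_nil_left] at h; simp at h; subst h; right; right; rfl
  | case2 v hv =>
    rw [sh_nil_right] at h; simp at h; subst h; right; left; rfl
  | case3 a v b w ih1 ih2 =>
    rw [sh_cons_cons] at h
    rcases List.mem_append.1 h with h | h <;> rcases List.mem_map.1 h with ⟨x, hx, rfl⟩
    · have hx' : x.length = v.length + (b :: w).length := sh_length hx
      have hxne : x ≠ [] := by intro hc; rw [hc] at hx'; simp at hx'
      have hlast : (a :: x).getLast? = x.getLast? := getLast?_cons_ne a hxne
      rcases ih1 hx with ⟨h1, -, -⟩ | h | h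
      · exact absurd h1 hxne
      · rcases v with _ | ⟨c, v⟩
        · rw [List.getLast?_nil, List.getLast?_eq_none_iff] at h
          exact absurd h hxne
        · right; left; rw [hlast, h, List.getLast?_cons_cons]
      · right; right; rw [hlast]; exact h
    · have hx' : x.length = (a :: v).length + w.length := sh_length hx
      have hxne : x ≠ [] := by intro hc; rw [hc] at hx'; simp at hx'; omega
      have hlast : (b :: x).getLast? = x.getLast? := getLast?_cons_ne b hxne
      rcases ih2 hx with ⟨h1, -, -⟩ | h | h
      · exact absurd h1 hxne
      · right; left; rw [hlast]; exact h
      · rcases w with _ | ⟨c, w⟩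
        · rw [List.getLast?_nil, List.getLast?_eq_none_iff] at h
          exact absurd h hxne
        · right; right; rw [hlast, h, List.getLast?_cons_cons]


lemma sh_snoc_m (a b : Bool) : ∀ (V W : List Bool),
    ((sh (V ++ [a]) (W ++ [b]) : List (List Bool)) : Multiset (List Bool)) =
      Multiset.map (· ++ [a]) (↑(sh V (W ++ [b]))) +
        Multiset.map (· ++ [b]) (↑(sh (V ++ [a]) W)) := by
  suffices H : ∀ n (V W : List Bool), V.length + W.length ≤ n →
      ((sh (V ++ [a]) (W ++ [b]) : List (List Bool)) : Multiset (List Bool)) =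
      Multiset.map (· ++ [a]) (↑(sh V (W ++ [b]))) +
        Multiset.map (· ++ [b]) (↑(sh (V ++ [a]) W)) by
    intro V W; exact H (V.length + W.length) V W le_rfl
  intro n
  induction n with
  | zero =>
    intro V W h
    have hV : V = [] := List.length_eq_zero_iff.1 (by omega)
    have hW : W = [] := List.length_eq_zero_iff.1 (by omega)
    subst hV; subst hW
    simp only [List.nil_append]
    rw [sh_cons_cons a b [] []]
    simp only [sh_nil_left, sh_nil_right, List.map_cons, List.map_nil, List.cons_append,
      List.nil_append, ← Multiset.coe_add, Multiset.coe_singleton, Multiset.map_singleton]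
    rw [← Multiset.coe_singleton, ← Multiset.coe_singleton, Multiset.coe_add,
      Multiset.coe_eq_coe]
    simp only [List.singleton_append]
    exact List.Perm.swap _ _ _
  | succ n ih =>
    intro n' W h
    rcases n' with _ | ⟨c, V'⟩
    · rcases W with _ | ⟨d, W'⟩
      · simp only [List.nil_append]
        rw [sh_cons_cons a b [] []]
        simp only [sh_nil_left, sh_nil_right, List.map_cons, List.map_nil, List.cons_append,
          List.nil_append, ← Multiset.coe_add, Multiset.coe_singleton, Multiset.map_singleton]
        rw [← Multiset.coe_singleton, ← Multiset.coe_singleton, Multiset.coe_add,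
          Multiset.coe_eq_coe]
        simp only [List.singleton_append]
        exact List.Perm.swap _ _ _
      · -- V = [], W = d :: W'
        have IH := ih [] W' (by simp only [List.length_cons, List.length_nil] at h ⊢; omega)
        simp only [List.nil_append, List.cons_append, sh_nil_left, sh_nil_right] at IH ⊢
        rw [sh_cons_cons a d [] (W' ++ [b]), sh_cons_cons a d [] W']
        simp only [sh_nil_left, sh_nil_right]
        simp only [List.map_cons, List.map_nil, List.map_append, List.map_map,
          ← Multiset.coe_add, ← Multiset.map_coe, Multiset.coe_singleton, Multiset.map_singleton]
        rw [IH]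
        simp only [Multiset.map_add, Multiset.map_map, Multiset.map_singleton,
          Function.comp_def, List.cons_append, List.append_assoc, List.singleton_append,
          List.nil_append, Multiset.coe_singleton]
        abel
    · rcases W with _ | ⟨d, W'⟩
      · -- W = [], V = c :: V'
        have IH := ih V' [] (by simp only [List.length_cons, List.length_nil] at h ⊢; omega)
        simp only [List.append_nil, List.nil_append, List.cons_append, sh_nil_left,
          sh_nil_right] at IH ⊢
        rw [sh_cons_cons c b (V' ++ [a]) [], sh_cons_cons c b V' []]
        simp only [sh_nil_left, sh_nil_right]
        simp only [List.map_cons, List.map_nil, List.map_append, List.map_map,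
          ← Multiset.coe_add, ← Multiset.map_coe, Multiset.coe_singleton, Multiset.map_singleton]
        rw [IH]
        simp only [Multiset.map_add, Multiset.map_map, Multiset.map_singleton,
          Function.comp_def, List.cons_append, List.append_assoc, List.singleton_append,
          List.nil_append, Multiset.coe_singleton]
        abel
      · -- V = c :: V', W = d :: W'
        have IH1 := ih V' (d :: W') (by simp only [List.length_cons, List.length_nil] at h ⊢; omega)
        have IH2 := ih (c :: V') W' (by simp only [List.length_cons, List.length_nil] at h ⊢; omega)
        simp only [List.cons_append] at IH1 IH2 ⊢
        rw [sh_cons_cons c d (V' ++ [a]) (W' ++ [b]), sh_cons_cons c d V' (W' ++ [b]),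
          sh_cons_cons c d (V' ++ [a]) W']
        simp only [List.map_append, List.map_map, ← Multiset.coe_add, ← Multiset.map_coe]
        rw [IH1, IH2]
        simp only [Multiset.map_add, Multiset.map_map, Function.comp_def,
          List.cons_append, List.append_assoc, List.singleton_append, List.nil_append]
        abel

lemma sh_reverse_m : ∀ (V W : List Bool),
    (((sh V W).map List.reverse : List (List Bool)) : Multiset (List Bool)) =
      (↑(sh V.reverse W.reverse) : Multiset (List Bool)) := by
  suffices H : ∀ n (V W : List Bool), V.length + W.length ≤ n →
      (((sh V W).map List.reverse : List (List Bool)) : Multiset (List Bool)) =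
      (↑(sh V.reverse W.reverse) : Multiset (List Bool)) by
    intro V W; exact H (V.length + W.length) V W le_rfl
  intro n
  induction n with
  | zero =>
    intro V W h
    have hV : V = [] := List.length_eq_zero_iff.1 (by omega)
    have hW : W = [] := List.length_eq_zero_iff.1 (by omega)
    subst hV; subst hW; simp [sh_nil_left]
  | succ n ih =>
    intro V W h
    rcases V with _ | ⟨a, V'⟩
    · simp [sh_nil_left]
    rcases W with _ | ⟨b, W'⟩
    · simp [sh_nil_right]
    have IH1 := ih V' (b :: W') (by simp only [List.length_cons, List.length_nil] at h ⊢; omega)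
    have IH2 := ih (a :: V') W' (by simp only [List.length_cons, List.length_nil] at h ⊢; omega)
    rw [sh_cons_cons a b V' W']
    rw [show (a :: V').reverse = V'.reverse ++ [a] by simp,
      show (b :: W').reverse = W'.reverse ++ [b] by simp, sh_snoc_m]
    rw [show (a :: V').reverse = V'.reverse ++ [a] by simp] at IH2
    rw [show (b :: W').reverse = W'.reverse ++ [b] by simp] at IH1
    simp only [List.map_append, List.map_map, ← Multiset.coe_add, ← Multiset.map_coe]
    rw [show (List.reverse ∘ (a :: ·) : List Bool → List Bool)
        = ((· ++ [a]) ∘ List.reverse) from funext (fun x => by simp),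
      show (List.reverse ∘ (b :: ·) : List Bool → List Bool)
        = ((· ++ [b]) ∘ List.reverse) from funext (fun x => by simp)]
    rw [← Multiset.map_map (· ++ [a]) List.reverse, ← Multiset.map_map (· ++ [b]) List.reverse]
    rw [Multiset.map_coe List.reverse, Multiset.map_coe List.reverse, IH1, IH2]

lemma sh_reverse_perm (V W : List Bool) :
    ((sh V W).map List.reverse).Perm (sh V.reverse W.reverse) :=
  Multiset.coe_eq_coe.1 (sh_reverse_m V W)


noncomputable def fB (b : Bool) (t : ℝ) : ℝ := if b then (1-t)⁻¹ else t⁻¹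

noncomputable def J : List Bool → ℝ → ℝ
  | [], _ => 1
  | b :: v, z => ∫ t in (0:ℝ)..z, fB b t * J v t

@[simp] lemma J_nil (z : ℝ) : J [] z = 1 := rfl
lemma J_cons (b : Bool) (v : List Bool) (z : ℝ) :
    J (b :: v) z = ∫ t in (0:ℝ)..z, fB b t * J v t := rfl

lemma J_zero {w : List Bool} (h : w ≠ []) : J w 0 = 0 := by
  cases w with
  | nil => exact absurd rfl h
  | cons b v => rw [J_cons, intervalIntegral.integral_same]

def Adm (w : List Bool) : Prop := w = [] ∨ w.getLast? = some true

lemma Adm_nil : Adm [] := Or.inl rfl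

lemma Adm_tail {a : Bool} {w : List Bool} (h : Adm (a :: w)) (hw : w ≠ []) : Adm w := by
  rcases h with h | h
  · simp at h
  · right
    cases w with
    | nil => exact absurd rfl hw
    | cons c t => rwa [List.getLast?_cons_cons] at h

lemma Adm_cons {a : Bool} {w : List Bool} (h : Adm w) (hw : w ≠ []) : Adm (a :: w) := by
  rcases h with rfl | h
  · exact absurd rfl hw
  · right
    cases w with
    | nil => exact absurd rfl hw
    | cons c t => rwa [List.getLast?_cons_cons]

lemma Adm_cons_nil {a : Bool} (h : Adm (a :: ([] : List Bool))) : a = true := by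
  rcases h with h | h
  · simp at h
  · simpa [List.getLast?] using h

lemma fB_measurable (b : Bool) : Measurable (fB b) := by
  cases b
  · exact (measurable_id (α := ℝ)).inv
  · exact ((measurable_const (α := ℝ)).sub measurable_id).inv

lemma fB_contOn (b : Bool) : ContinuousOn (fB b) (Ioo (0:ℝ) 1) := by
  cases b
  · exact ContinuousOn.inv₀ continuousOn_id (fun t ht => ne_of_gt ht.1)
  · exact ContinuousOn.inv₀ (continuousOn_const.sub continuousOn_id)
      (fun t ht => sub_ne_zero.2 (ne_of_gt ht.2))

lemma one_le_B {b : ℝ} (hb0 : 0 ≤ b) (hb1 : b < 1) : (1 : ℝ) ≤ (1-b)⁻¹ :=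
  (one_le_inv_iff₀).2 ⟨by linarith, by linarith⟩

lemma B_nonneg {b : ℝ} (hb1 : b < 1) : (0:ℝ) ≤ (1-b)⁻¹ := inv_nonneg.2 (by linarith)

/-- pointwise bound for the integrand `fB a t * J w t`; `hU` is a uniform bound for `J w`,
`hR` a linear bound (needed when `a = false`). -/
lemma integrand_bound {a : Bool} {w : List Bool} {b s C : ℝ} (hb0 : 0 ≤ b) (hb1 : b < 1)
    (hs : s ∈ Ioc (0:ℝ) b) (hC0 : 1 ≤ C)
    (hU : |J w s| ≤ C) (hR : a = false → |J w s| ≤ C * s) :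
    ‖fB a s * J w s‖ ≤ (1-b)⁻¹ * C := by
  have hs0 : 0 < s := hs.1
  have hsb : s ≤ b := hs.2
  rw [Real.norm_eq_abs, abs_mul]
  cases a
  · -- a = false : fB = s⁻¹
    have hJ : |J w s| ≤ C * s := hR rfl
    simp only [fB, if_neg Bool.false_ne_true]
    rw [abs_of_nonneg (inv_nonneg.2 hs0.le)]
    calc s⁻¹ * |J w s| ≤ s⁻¹ * (C * s) := by
          apply mul_le_mul_of_nonneg_left hJ (inv_nonneg.2 hs0.le)
      _ = C := by field_simp
      _ ≤ (1-b)⁻¹ * C := le_mul_of_one_le_left (by linarith) (one_le_B hb0 hb1)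
  · -- a = true : fB = (1-s)⁻¹
    simp only [fB, if_pos]
    have h1s : 0 < 1 - s := by linarith
    rw [abs_of_nonneg (inv_nonneg.2 h1s.le)]
    have : (1-s)⁻¹ ≤ (1-b)⁻¹ := by
      apply inv_anti₀ (by linarith) (by linarith)
    exact mul_le_mul this hU (abs_nonneg _) (B_nonneg hb1)

/-- Main analytic bundle for `J` on admissible words. -/
lemma J_bundle : ∀ (w : List Bool), Adm w →
    ((∀ b : ℝ, 0 ≤ b → b < 1 → ∀ t : ℝ, 0 ≤ t → t ≤ b →
        (w ≠ [] → |J w t| ≤ ((1-b)⁻¹) ^ w.length * t)) ∧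
      ContinuousOn (J w) (Ico (0:ℝ) 1) ∧
      (∀ a : Bool, Adm (a :: w) → ∀ z : ℝ, 0 ≤ z → z < 1 →
        IntervalIntegrable (fun t => fB a t * J w t) volume 0 z)) := by
  intro w
  induction w with
  | nil =>
    intro _
    refine ⟨fun b hb0 hb1 t ht0 htb h => absurd rfl h, continuousOn_const, ?_⟩
    intro a ha z hz0 hz1
    have ha' : a = true := Adm_cons_nil ha
    subst ha'
    apply ContinuousOn.intervalIntegrable
    rw [uIcc_of_le hz0]
    intro t ht
    simp only [J_nil, mul_one, fB, if_pos]
    exact ContinuousWithinAt.inv₀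
      (continuousWithinAt_const.sub continuousWithinAt_id)
      (by rw [sub_ne_zero]; exact (ne_of_lt (lt_of_le_of_lt ht.2 hz1)).symm)
  | cons a w ih =>
    intro hA
    have hAw : Adm w := by
      by_cases hw : w = []
      · rw [hw]; exact Adm_nil
      · exact Adm_tail hA hw
    obtain ⟨ihB, ihC, ihI⟩ := ih hAw
    -- uniform bound for J w
    have hU : ∀ b : ℝ, 0 ≤ b → b < 1 → ∀ t : ℝ, 0 ≤ t → t ≤ b →
        |J w t| ≤ ((1-b)⁻¹) ^ w.length := by
      intro b hb0 hb1 t ht0 htb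
      by_cases hw : w = []
      · subst hw; simp
      · calc |J w t| ≤ ((1-b)⁻¹) ^ w.length * t := ihB b hb0 hb1 t ht0 htb hw
          _ ≤ ((1-b)⁻¹) ^ w.length * 1 :=
            mul_le_mul_of_nonneg_left (by linarith) (pow_nonneg (B_nonneg hb1) _)
          _ = _ := mul_one _
    have hfalse : a = false → w ≠ [] := by
      intro haf hw
      subst hw
      have := Adm_cons_nil hA
      rw [haf] at this
      simp at this
    -- the interval integrability of the integrand at this level
    have hInt : ∀ z : ℝ, 0 ≤ z → z < 1 →
        IntervalIntegrable (fun t => fB a t * J w t) volume 0 z := fun z => ihI a hA z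
    -- (1) linear bound for J (a :: w)
    have hbound : ∀ b : ℝ, 0 ≤ b → b < 1 → ∀ t : ℝ, 0 ≤ t → t ≤ b →
        |J (a :: w) t| ≤ ((1-b)⁻¹) ^ (a :: w).length * t := by
      intro b hb0 hb1 t ht0 htb
      rw [J_cons]
      have key := intervalIntegral.norm_integral_le_of_norm_le_const
        (C := ((1-b)⁻¹) ^ (a :: w).length) (f := fun s => fB a s * J w s) (a := 0) (b := t) ?_
      · rw [Real.norm_eq_abs] at key
        simpa [abs_of_nonneg ht0] using key
      · intro s hs
        rw [uIoc_of_le ht0] at hs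
        have hs' : s ∈ Ioc (0:ℝ) b := ⟨hs.1, le_trans hs.2 htb⟩
        have := integrand_bound (C := ((1-b)⁻¹) ^ w.length) hb0 hb1 hs'
          (one_le_pow₀ (one_le_B hb0 hb1))
          (hU b hb0 hb1 s hs.1.le hs'.2)
          (fun haf => ihB b hb0 hb1 s hs.1.le hs'.2 (hfalse haf))
        calc ‖fB a s * J w s‖ ≤ (1-b)⁻¹ * ((1-b)⁻¹) ^ w.length := this
          _ = ((1-b)⁻¹) ^ (a :: w).length := by rw [List.length_cons, pow_succ]; ring
    -- (2) continuity on [0,1)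
    have hcont : ContinuousOn (J (a :: w)) (Ico (0:ℝ) 1) := by
      intro x hx
      set y : ℝ := (x + 1)/2 with hy
      have hxy : x < y := by rw [hy]; linarith [hx.2]
      have hy0 : 0 ≤ y := by rw [hy]; linarith [hx.1]
      have hy1 : y < 1 := by rw [hy]; linarith [hx.2]
      have hIy : IntegrableOn (fun s => fB a s * J w s) (uIcc 0 y) volume := by
        rw [uIcc_of_le hy0]
        exact (intervalIntegrable_iff_integrableOn_Icc_of_le hy0).1 (hInt y hy0 hy1)
      have hcy : ContinuousOn (J (a :: w)) (Icc 0 y) := by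
        have := intervalIntegral.continuousOn_primitive_interval hIy
        rwa [uIcc_of_le hy0] at this
      have hmem : Icc (0:ℝ) y ∈ nhdsWithin x (Ico (0:ℝ) 1) := by
        apply mem_nhdsWithin.2
        exact ⟨Iio y, isOpen_Iio, hxy, fun s hs => ⟨hs.2.1, le_of_lt hs.1⟩⟩
      exact (hcy.continuousWithinAt ⟨hx.1, hxy.le⟩).mono_of_mem_nhdsWithin hmem
    refine ⟨fun b hb0 hb1 t ht0 htb _ => hbound b hb0 hb1 t ht0 htb, hcont, ?_⟩
    -- (3) integrability at level a' :: a :: w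
    intro a' _ z hz0 hz1
    rw [intervalIntegrable_iff_integrableOn_Ioc_of_le hz0]
    have hmeas : AEStronglyMeasurable (fun t => fB a' t * J (a :: w) t)
        (volume.restrict (Ioc (0:ℝ) z)) := by
      apply AEStronglyMeasurable.mul
      · exact (fB_measurable a').aestronglyMeasurable
      · exact ContinuousOn.aestronglyMeasurable
          (hcont.mono (fun s hs => ⟨hs.1.le, lt_of_le_of_lt hs.2 hz1⟩)) measurableSet_Ioc
    apply Integrable.mono' (g := fun _ => (1-z)⁻¹ * ((1-z)⁻¹) ^ (a :: w).length)
      (integrable_const _) hmeas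
    · filter_upwards [ae_restrict_mem measurableSet_Ioc] with s hs
      exact integrand_bound hz0 hz1 hs (one_le_pow₀ (one_le_B hz0 hz1))
        (by calc |J (a :: w) s| ≤ ((1-z)⁻¹) ^ (a :: w).length * s :=
              hbound z hz0 hz1 s hs.1.le hs.2
            _ ≤ ((1-z)⁻¹) ^ (a :: w).length * 1 :=
              mul_le_mul_of_nonneg_left (le_trans hs.2 hz1.le)
                (pow_nonneg (B_nonneg hz1) _)
            _ = _ := mul_one _)
        (fun _ => hbound z hz0 hz1 s hs.1.le hs.2)

lemma J_contOn {w : List Bool} (h : Adm w) : ContinuousOn (J w) (Ico (0:ℝ) 1) :=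
  (J_bundle w h).2.1

lemma J_linear_bound {w : List Bool} (h : Adm w) (hw : w ≠ []) {b t : ℝ}
    (hb0 : 0 ≤ b) (hb1 : b < 1) (ht0 : 0 ≤ t) (htb : t ≤ b) :
    |J w t| ≤ ((1-b)⁻¹) ^ w.length * t :=
  (J_bundle w h).1 b hb0 hb1 t ht0 htb hw

lemma J_intInt {a : Bool} {w : List Bool} (h : Adm (a :: w)) {z : ℝ}
    (hz0 : 0 ≤ z) (hz1 : z < 1) :
    IntervalIntegrable (fun t => fB a t * J w t) volume 0 z := by
  have hAw : Adm w := by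
    by_cases hw : w = []
    · rw [hw]; exact Adm_nil
    · exact Adm_tail h hw
  exact (J_bundle w hAw).2.2 a h z hz0 hz1

lemma J_hasDerivAt {a : Bool} {w : List Bool} (h : Adm (a :: w)) {z : ℝ}
    (hz0 : 0 < z) (hz1 : z < 1) :
    HasDerivAt (J (a :: w)) (fB a z * J w z) z := by
  have hAw : Adm w := by
    by_cases hw : w = []
    · rw [hw]; exact Adm_nil
    · exact Adm_tail h hw
  have hzo : z ∈ Ioo (0:ℝ) 1 := ⟨hz0, hz1⟩
  have hco : ContinuousOn (fun t => fB a t * J w t) (Ioo (0:ℝ) 1) := by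
    apply ContinuousOn.mul (fB_contOn a)
    exact (J_contOn hAw).mono (fun s hs => ⟨hs.1.le, hs.2⟩)
  have hca : ContinuousAt (fun t => fB a t * J w t) z :=
    hco.continuousAt (isOpen_Ioo.mem_nhds hzo)
  have hsm : StronglyMeasurableAtFilter (fun t => fB a t * J w t) (nhds z) volume :=
    hco.stronglyMeasurableAtFilter isOpen_Ioo _ hzo
  exact intervalIntegral.integral_hasDerivAt_right
    (J_intInt h hz0.le hz1) hsm hca


lemma Adm_of_cons {a : Bool} {w : List Bool} (h : Adm (a :: w)) : Adm w := by
  by_cases hw : w = []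
  · rw [hw]; exact Adm_nil
  · exact Adm_tail h hw

lemma Adm_sh {v w u : List Bool} (hv : Adm v) (hw : Adm w) (h : u ∈ sh v w) : Adm u := by
  rcases sh_getLast h with ⟨h1, -, -⟩ | h1 | h1
  · exact Or.inl h1
  · rcases hv with rfl | hv
    · left
      rw [List.getLast?_nil, List.getLast?_eq_none_iff] at h1
      exact h1
    · right; rw [h1]; exact hv
  · rcases hw with rfl | hw
    · left
      rw [List.getLast?_nil, List.getLast?_eq_none_iff] at h1
      exact h1
    · right; rw [h1]; exact hw

lemma list_sum_intInt {α : Type*} (L : List α) (F : α → ℝ → ℝ) {z : ℝ}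
    (h : ∀ u ∈ L, IntervalIntegrable (F u) volume 0 z) :
    IntervalIntegrable (fun t => (L.map (fun u => F u t)).sum) volume 0 z := by
  induction L with
  | nil => simpa using intervalIntegrable_const (c := (0:ℝ))
  | cons u L ih =>
    simp only [List.map_cons, List.sum_cons]
    exact (h u (by simp)).add (ih (fun x hx => h x (by simp [hx])))

lemma list_sum_integral {α : Type*} (L : List α) (F : α → ℝ → ℝ) {z : ℝ}
    (h : ∀ u ∈ L, IntervalIntegrable (F u) volume 0 z) :
    (L.map (fun u => ∫ t in (0:ℝ)..z, F u t)).sum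
      = ∫ t in (0:ℝ)..z, (L.map (fun u => F u t)).sum := by
  induction L with
  | nil => simp
  | cons u L ih =>
    simp only [List.map_cons, List.sum_cons]
    rw [ih (fun x hx => h x (by simp [hx])),
      ← intervalIntegral.integral_add (h u (by simp))
        (list_sum_intInt L F (fun x hx => h x (by simp [hx])))]

lemma list_sum_map_mul {α : Type*} (L : List α) (G : α → ℝ) (c : ℝ) :
    (L.map (fun u => c * G u)).sum = c * (L.map G).sum := by
  induction L with
  | nil => simp
  | cons u L ih => simp [ih, mul_add]

theorem J_shuffle : ∀ (v w : List Bool), Adm v → Adm w → ∀ z : ℝ, 0 ≤ z → z < 1 →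
    J v z * J w z = ((sh v w).map (fun u => J u z)).sum := by
  suffices H : ∀ n (v w : List Bool), v.length + w.length ≤ n →
      Adm v → Adm w → ∀ z : ℝ, 0 ≤ z → z < 1 →
      J v z * J w z = ((sh v w).map (fun u => J u z)).sum by
    intro v w; exact H (v.length + w.length) v w le_rfl
  intro n
  induction n with
  | zero =>
    intro v w h _ _ z _ _
    have hv : v = [] := List.length_eq_zero_iff.1 (by omega)
    have hw : w = [] := List.length_eq_zero_iff.1 (by omega)
    subst hv; subst hw
    simp [sh_nil_left]
  | succ n ih =>
    intro v w hlen hAv hAw z hz0 hz1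
    rcases v with _ | ⟨a, v'⟩
    · simp [sh_nil_left]
    rcases w with _ | ⟨b, w'⟩
    · simp [sh_nil_right]
    -- both nonempty
    have hAv' : Adm v' := Adm_of_cons hAv
    have hAw' : Adm w' := Adm_of_cons hAw
    rcases eq_or_lt_of_le hz0 with rfl | hz0'
    · -- z = 0
      rw [J_zero (by simp : (a :: v') ≠ []), zero_mul]
      symm
      apply List.sum_eq_zero
      intro x hx
      rcases List.mem_map.1 hx with ⟨u, hu, rfl⟩
      have : u.length = (a :: v').length + (b :: w').length := sh_length hu
      apply J_zero
      intro hc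
      rw [hc] at this
      simp at this
    -- z > 0 : both sides are integrals over [0, z]
    -- integrability of all the shuffle integrands
    have hint1 : ∀ u ∈ sh v' (b :: w'), IntervalIntegrable (fun t => fB a t * J u t) volume 0 z := by
      intro u hu
      have hu' : u ≠ [] := by
        have := sh_length hu; intro hc; rw [hc] at this; simp at this
      exact J_intInt (Adm_cons (Adm_sh hAv' hAw hu) hu') hz0 hz1
    have hint2 : ∀ u ∈ sh (a :: v') w', IntervalIntegrable (fun t => fB b t * J u t) volume 0 z := by
      intro u hu
      have hu' : u ≠ [] := by
        have := sh_length hu; intro hc; rw [hc] at this; simp at this; omega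
      exact J_intInt (Adm_cons (Adm_sh hAv hAw' hu) hu') hz0 hz1
    -- RHS as a single integral
    have hRHS : ((sh (a :: v') (b :: w')).map (fun u => J u z)).sum
        = ∫ t in (0:ℝ)..z,
            (((sh v' (b :: w')).map (fun u => fB a t * J u t)).sum
              + ((sh (a :: v') w').map (fun u => fB b t * J u t)).sum) := by
      rw [sh_cons_cons, List.map_append, List.sum_append, List.map_map, List.map_map]
      have e1 : ((fun u => J u z) ∘ (a :: ·)) = fun u => ∫ t in (0:ℝ)..z, fB a t * J u t := by
        funext u; simp [Function.comp, J_cons]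
      have e2 : ((fun u => J u z) ∘ (b :: ·)) = fun u => ∫ t in (0:ℝ)..z, fB b t * J u t := by
        funext u; simp [Function.comp, J_cons]
      rw [e1, e2, list_sum_integral _ _ hint1, list_sum_integral _ _ hint2,
        ← intervalIntegral.integral_add (list_sum_intInt _ _ hint1) (list_sum_intInt _ _ hint2)]
    -- LHS as a single integral (FTC)
    have hIcc : Icc (0:ℝ) z ⊆ Ico (0:ℝ) 1 := fun s hs => ⟨hs.1, lt_of_le_of_lt hs.2 hz1⟩
    have hcontF : ContinuousOn (fun s => J (a :: v') s * J (b :: w') s) (Icc 0 z) :=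
      ((J_contOn hAv).mono hIcc).mul ((J_contOn hAw).mono hIcc)
    have hderiv : ∀ t ∈ Ioo (0:ℝ) z, HasDerivAt (fun s => J (a :: v') s * J (b :: w') s)
        ((fB a t * J v' t) * J (b :: w') t + J (a :: v') t * (fB b t * J w' t)) t := by
      intro t ht
      exact (J_hasDerivAt hAv ht.1 (lt_trans ht.2 hz1)).mul
        (J_hasDerivAt hAw ht.1 (lt_trans ht.2 hz1))
    have hintF' : IntervalIntegrable (fun t =>
        (fB a t * J v' t) * J (b :: w') t + J (a :: v') t * (fB b t * J w' t)) volume 0 z := by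
      apply IntervalIntegrable.add
      · apply IntervalIntegrable.mul_continuousOn (J_intInt hAv hz0 hz1)
        rw [uIcc_of_le hz0]
        exact (J_contOn hAw).mono hIcc
      · apply IntervalIntegrable.continuousOn_mul (J_intInt hAw hz0 hz1)
        rw [uIcc_of_le hz0]
        exact (J_contOn hAv).mono hIcc
    have hFTC := intervalIntegral.integral_eq_sub_of_hasDerivAt_of_le hz0 hcontF hderiv hintF'
    rw [J_zero (by simp : (a :: v') ≠ []), zero_mul, sub_zero] at hFTC
    rw [← hFTC, hRHS]
    -- now equate the integrands pointwise on [0, z]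
    apply intervalIntegral.integral_congr
    intro t ht
    rw [uIcc_of_le hz0] at ht
    have ht1 : t < 1 := lt_of_le_of_lt ht.2 hz1
    have IH1 : J v' t * J (b :: w') t = ((sh v' (b :: w')).map (fun u => J u t)).sum :=
      ih v' (b :: w') (by simp at hlen ⊢; omega) hAv' hAw t ht.1 ht1
    have IH2 : J (a :: v') t * J w' t = ((sh (a :: v') w').map (fun u => J u t)).sum :=
      ih (a :: v') w' (by simp at hlen ⊢; omega) hAv hAw' t ht.1 ht1
    have d1 : ((sh v' (b :: w')).map (fun u => fB a t * J u t)).sum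
        = fB a t * (J v' t * J (b :: w') t) := by
      rw [IH1, ← list_sum_map_mul]
    have d2 : ((sh (a :: v') w').map (fun u => fB b t * J u t)).sum
        = fB b t * (J (a :: v') t * J w' t) := by
      rw [IH2, ← list_sum_map_mul]
    dsimp only
    rw [d1, d2]; ring


/-! ### basic index facts -/

instance (r : ℕ) : Countable (Incr r) := by unfold Incr; infer_instance

noncomputable def lastVal {r : ℕ} (m : Incr r) : ℕ :=
  if h : 0 < r then m.1 ⟨r - 1, Nat.sub_lt h Nat.one_pos⟩ else 0

noncomputable def den {r : ℕ} (k : Fin r → ℕ) (m : Incr r) : ℝ := ∏ i, (m.1 i : ℝ) ^ k i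

noncomputable def term {r : ℕ} (k : Fin r → ℕ) (z : ℝ) (m : Incr r) : ℝ :=
  z ^ lastVal m / den k m

lemma LiF_eq {r : ℕ} (k : Fin r → ℕ) (z : ℝ) : LiF k z = ∑' m : Incr r, term k z m := by
  unfold LiF term den lastVal
  apply tsum_congr
  intro m
  by_cases h : 0 < r <;> simp [h]

lemma one_le_den {r : ℕ} (k : Fin r → ℕ) (m : Incr r) : 1 ≤ den k m := by
  unfold den
  calc (1:ℝ) = ∏ _i : Fin r, 1 := by simp
    _ ≤ ∏ i, (m.1 i : ℝ) ^ k i :=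
      Finset.prod_le_prod (fun i _ => zero_le_one)
        (fun i _ => one_le_pow₀ (by exact_mod_cast m.2.2 i))

lemma den_pos {r : ℕ} (k : Fin r → ℕ) (m : Incr r) : 0 < den k m :=
  lt_of_lt_of_le one_pos (one_le_den k m)

lemma term_nonneg {r : ℕ} (k : Fin r → ℕ) {z : ℝ} (h0 : 0 ≤ z) (m : Incr r) :
    0 ≤ term k z m := div_nonneg (pow_nonneg h0 _) (den_pos k m).le

lemma lastVal_last {r : ℕ} (m : Incr (r+1)) : lastVal m = m.1 (Fin.last r) := by
  rw [lastVal, dif_pos (Nat.succ_pos r)]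
  congr 1

lemma lastVal_mono {r : ℕ} (m : Incr r) (i : Fin r) : m.1 i ≤ lastVal m := by
  have hr : 0 < r := i.pos
  rw [lastVal, dif_pos hr]
  apply m.2.1.monotone
  rw [Fin.le_def]
  exact Nat.le_sub_one_of_lt i.2

lemma lastVal_pos {r : ℕ} (m : Incr (r+1)) : 0 < lastVal m := by
  rw [lastVal_last]; exact m.2.2 _

/-! ### the snoc equivalence -/

noncomputable def incr0 : Incr 0 :=
  ⟨fun i => i.elim0, fun i => i.elim0, fun i => i.elim0⟩

instance : Subsingleton (Incr 0) := ⟨fun a b => Subtype.ext (funext fun i => i.elim0)⟩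

lemma LiF_zero (k : Fin 0 → ℕ) (z : ℝ) : LiF k z = 1 := by
  rw [LiF_eq, tsum_eq_single incr0 (fun b hb => absurd (Subsingleton.elim b incr0) hb)]
  simp [term, den, lastVal]

lemma snoc_strictMono {r : ℕ} (m : Incr r) (e : ℕ) :
    StrictMono (Fin.snoc m.1 (lastVal m + 1 + e) : Fin (r+1) → ℕ) := by
  intro i j hij
  by_cases hj : j = Fin.last r
  · subst hj
    rw [Fin.snoc_last]
    obtain ⟨i0, rfl⟩ := Fin.exists_castSucc_eq.2 (ne_of_lt hij)
    rw [Fin.snoc_castSucc]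
    have := lastVal_mono m i0
    omega
  · obtain ⟨j0, rfl⟩ := Fin.exists_castSucc_eq.2 hj
    have hi : i ≠ Fin.last r := by
      intro hc
      subst hc
      exact absurd hij (not_lt.2 (Fin.castSucc_lt_last j0).le)
    obtain ⟨i0, rfl⟩ := Fin.exists_castSucc_eq.2 hi
    rw [Fin.snoc_castSucc, Fin.snoc_castSucc]
    exact m.2.1 (Fin.castSucc_lt_castSucc_iff.1 hij)

lemma snoc_pos {r : ℕ} (m : Incr r) (e : ℕ) :
    ∀ i, 0 < (Fin.snoc m.1 (lastVal m + 1 + e) : Fin (r+1) → ℕ) i := by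
  intro i
  by_cases hi : i = Fin.last r
  · subst hi; rw [Fin.snoc_last]; omega
  · obtain ⟨i0, rfl⟩ := Fin.exists_castSucc_eq.2 hi
    rw [Fin.snoc_castSucc]
    exact m.2.2 i0

noncomputable def snocIncr {r : ℕ} (m : Incr r) (e : ℕ) : Incr (r+1) :=
  ⟨Fin.snoc m.1 (lastVal m + 1 + e), snoc_strictMono m e, snoc_pos m e⟩

lemma snocIncr_val {r : ℕ} (m : Incr r) (e : ℕ) :
    (snocIncr m e).1 = Fin.snoc m.1 (lastVal m + 1 + e) := rfl

noncomputable def initIncr {r : ℕ} (M : Incr (r+1)) : Incr r :=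
  ⟨fun i => M.1 i.castSucc, fun i j h => M.2.1 (Fin.castSucc_lt_castSucc_iff.2 h),
    fun i => M.2.2 _⟩

lemma lastVal_snoc {r : ℕ} (m : Incr r) (e : ℕ) :
    lastVal (snocIncr m e) = lastVal m + 1 + e := by
  rw [lastVal_last]
  show (snocIncr m e).1 (Fin.last r) = _
  rw [snocIncr_val, Fin.snoc_last]

lemma init_snoc {r : ℕ} (m : Incr r) (e : ℕ) : initIncr (snocIncr m e) = m := by
  apply Subtype.ext
  funext i
  show (snocIncr m e).1 i.castSucc = m.1 i
  rw [snocIncr_val, Fin.snoc_castSucc]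

lemma lastVal_init_lt {r : ℕ} (M : Incr (r+1)) :
    lastVal (initIncr M) < M.1 (Fin.last r) := by
  rcases Nat.eq_zero_or_pos r with rfl | hr
  · rw [lastVal, dif_neg (lt_irrefl 0)]
    exact M.2.2 _
  · rw [lastVal, dif_pos hr]
    apply M.2.1
    rw [Fin.lt_def]
    show r - 1 < r
    omega

noncomputable def incrEquiv (r : ℕ) : Incr (r+1) ≃ Incr r × ℕ where
  toFun M := (initIncr M, M.1 (Fin.last r) - lastVal (initIncr M) - 1)
  invFun p := snocIncr p.1 p.2
  left_inv M := by
    apply Subtype.ext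
    funext i
    show (snocIncr (initIncr M) (M.1 (Fin.last r) - lastVal (initIncr M) - 1)).1 i = M.1 i
    by_cases hi : i = Fin.last r
    · subst hi
      rw [snocIncr_val, Fin.snoc_last]
      have := lastVal_init_lt M
      omega
    · obtain ⟨i0, rfl⟩ := Fin.exists_castSucc_eq.2 hi
      rw [snocIncr_val, Fin.snoc_castSucc]
      rfl
  right_inv p := by
    obtain ⟨m, e⟩ := p
    have h1 : initIncr (snocIncr m e) = m := init_snoc m e
    refine Prod.ext h1 ?_
    show (snocIncr m e).1 (Fin.last r) - lastVal (initIncr (snocIncr m e)) - 1 = e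
    rw [h1, snocIncr_val, Fin.snoc_last]
    omega

lemma den_snoc {r : ℕ} (k : Fin (r+1) → ℕ) (m : Incr r) (e : ℕ) :
    den k (snocIncr m e) =
      den (fun i => k i.castSucc) m * ((lastVal m + 1 + e : ℕ) : ℝ) ^ k (Fin.last r) := by
  unfold den
  rw [Fin.prod_univ_castSucc]
  congr 1
  · apply Finset.prod_congr rfl
    intro i _
    congr 1
    rw [snocIncr_val, Fin.snoc_castSucc]
  · congr 1
    rw [snocIncr_val, Fin.snoc_last]

/-! ### summability -/

lemma summable_term {r : ℕ} (k : Fin r → ℕ) {z : ℝ} (h0 : 0 ≤ z) (h1 : z < 1) :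
    Summable (term k z) := by
  induction r with
  | zero =>
    haveI : Finite (Incr 0) := Finite.of_subsingleton
    exact Summable.of_finite
  | succ r ih =>
    rw [← Equiv.summable_iff (incrEquiv r).symm]
    have hg : Summable (fun p : Incr r × ℕ =>
        term (fun i => k i.castSucc) z p.1 * (z ^ p.2 * z)) := by
      have := Summable.mul_of_nonneg (f := term (fun i : Fin r => k i.castSucc) z)
        (g := fun e : ℕ => z ^ e * z) (ih _)
        ((summable_geometric_of_lt_one h0 h1).mul_right z)
        (fun m => term_nonneg _ h0 m)
        (fun e => mul_nonneg (pow_nonneg h0 _) h0)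
      exact this
    apply Summable.of_nonneg_of_le (fun p => term_nonneg _ h0 _) (fun p => ?_) hg
    obtain ⟨m, e⟩ := p
    show term k z (snocIncr m e) ≤ _
    unfold term
    rw [lastVal_snoc, den_snoc]
    have hC : (1:ℝ) ≤ ((lastVal m + 1 + e : ℕ) : ℝ) ^ k (Fin.last r) :=
      one_le_pow₀ (by exact_mod_cast Nat.succ_le_of_lt (by omega))
    have hD := den_pos (fun i => k i.castSucc) m
    calc z ^ (lastVal m + 1 + e) /
          (den (fun i => k i.castSucc) m * ((lastVal m + 1 + e : ℕ) : ℝ) ^ k (Fin.last r))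
        ≤ z ^ (lastVal m + 1 + e) / den (fun i => k i.castSucc) m := by
          apply div_le_div_of_nonneg_left (pow_nonneg h0 _) hD
          exact le_mul_of_one_le_right hD.le hC
      _ = term (fun i => k i.castSucc) z m * (z ^ e * z) := by
          unfold term
          rw [show lastVal m + 1 + e = lastVal m + (e + 1) from by omega, pow_add, pow_succ]
          ring

/-! ### integral helpers -/

lemma setInt_pow (n : ℕ) {z : ℝ} (h0 : 0 ≤ z) :
    ∫ t in Ioc (0:ℝ) z, t ^ n = z ^ (n+1) / (n+1) := by
  rw [← intervalIntegral.integral_of_le h0, integral_pow]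
  rw [zero_pow (Nat.succ_ne_zero n)]
  ring

lemma int_norm_le {f : ℝ → ℝ} {z C : ℝ} (h0 : 0 ≤ z)
    (hf : IntegrableOn (fun t => ‖f t‖) (Ioc (0:ℝ) z) volume)
    (hC : ∀ t ∈ Ioc (0:ℝ) z, ‖f t‖ ≤ C) :
    ∫ t in Ioc (0:ℝ) z, ‖f t‖ ≤ C * z := by
  have hvol : volume (Ioc (0:ℝ) z) < ⊤ := by
    rw [Real.volume_Ioc]; exact ENNReal.ofReal_lt_top
  have h1 : ∫ t in Ioc (0:ℝ) z, ‖f t‖ ≤ ∫ _ in Ioc (0:ℝ) z, C := by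
    apply integral_mono_of_nonneg
    · exact (ae_restrict_mem measurableSet_Ioc).mono fun t _ => norm_nonneg _
    · exact integrableOn_const hvol.ne
    · exact (ae_restrict_mem measurableSet_Ioc).mono hC
  rw [setIntegral_const, Real.volume_real_Ioc_of_le h0,
    smul_eq_mul] at h1
  calc ∫ t in Ioc (0:ℝ) z, ‖f t‖ ≤ (z - 0) * C := h1
    _ = C * z := by ring

lemma geom_int (M : ℕ) {z : ℝ} (h0 : 0 ≤ z) (h1 : z < 1) :
    ∫ t in Ioc (0:ℝ) z, t ^ M * (1-t)⁻¹ = ∑' e : ℕ, z ^ (M + 1 + e) / (M + 1 + e) := by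
  have hcong : ∀ t ∈ Ioc (0:ℝ) z, t ^ M * (1-t)⁻¹ = ∑' e : ℕ, t ^ (M + e) := by
    intro t ht
    rw [← tsum_geometric_of_lt_one ht.1.le (lt_of_le_of_lt ht.2 h1), ← tsum_mul_left]
    exact tsum_congr fun e => (pow_add t M e).symm
  rw [setIntegral_congr_fun measurableSet_Ioc hcong]
  rw [← MeasureTheory.integral_tsum_of_summable_integral_norm
    (fun e => (continuous_pow (M+e)).integrableOn_Ioc) ?_]
  · apply tsum_congr
    intro e
    rw [setInt_pow (M+e) h0, show M + e + 1 = M + 1 + e from by omega]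
    congr 1
    push_cast
    ring
  · apply Summable.of_nonneg_of_le
      (fun e => integral_nonneg fun t => norm_nonneg _) (fun e => ?_)
      (((summable_geometric_of_lt_one h0 h1).mul_left (z ^ M)).mul_right z)
    calc ∫ t in Ioc (0:ℝ) z, ‖t ^ (M + e)‖
        ≤ z ^ (M + e) * z := by
          apply int_norm_le h0 ((continuous_pow (M+e)).norm.integrableOn_Ioc)
          intro t ht
          rw [Real.norm_eq_abs, abs_of_nonneg (pow_nonneg ht.1.le _)]
          exact pow_le_pow_left₀ ht.1.le ht.2 _
      _ = z ^ M * z ^ e * z := by rw [pow_add]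

/-! ### recursion in the last exponent -/

lemma den_update {r : ℕ} (k : Fin (r+1) → ℕ) (m : Incr (r+1)) :
    den (Function.update k (Fin.last r) (k (Fin.last r) + 1)) m
      = den k m * (m.1 (Fin.last r) : ℝ) := by
  unfold den
  rw [Fin.prod_univ_castSucc, Fin.prod_univ_castSucc]
  have h1 : ∀ i : Fin r,
      Function.update k (Fin.last r) (k (Fin.last r) + 1) i.castSucc = k i.castSucc :=
    fun i => Function.update_of_ne (ne_of_lt (Fin.castSucc_lt_last i)) _ _
  simp only [h1, Function.update_self, pow_succ]
  ring

lemma LiF_update {r : ℕ} (k : Fin (r+1) → ℕ) {z : ℝ} (h0 : 0 ≤ z) (h1 : z < 1) :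
    LiF (Function.update k (Fin.last r) (k (Fin.last r) + 1)) z
      = ∫ t in (0:ℝ)..z, t⁻¹ * LiF k t := by
  rw [intervalIntegral.integral_of_le h0]
  have hstep : ∀ t ∈ Ioc (0:ℝ) z, t⁻¹ * LiF k t
      = ∑' m : Incr (r+1), t ^ (lastVal m - 1) / den k m := by
    intro t ht
    rw [LiF_eq, ← tsum_mul_left]
    apply tsum_congr
    intro m
    unfold term
    obtain ⟨L, hL'⟩ : ∃ L, lastVal m = L + 1 :=
      ⟨lastVal m - 1, by have := lastVal_pos m; omega⟩
    rw [hL', Nat.add_sub_cancel, pow_succ]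
    have ht0 : t ≠ 0 := ne_of_gt ht.1
    have hD : den k m ≠ 0 := ne_of_gt (den_pos k m)
    field_simp
  rw [setIntegral_congr_fun measurableSet_Ioc hstep]
  rw [← MeasureTheory.integral_tsum_of_summable_integral_norm
    (fun m => ((continuous_pow (lastVal m - 1)).div_const (den k m)).integrableOn_Ioc) ?_]
  · rw [LiF_eq]
    apply tsum_congr
    intro m
    unfold term
    rw [den_update, ← lastVal_last]
    obtain ⟨L, hL'⟩ : ∃ L, lastVal m = L + 1 :=
      ⟨lastVal m - 1, by have := lastVal_pos m; omega⟩
    rw [hL', Nat.add_sub_cancel, MeasureTheory.integral_div, setInt_pow L h0]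
    push_cast
    rw [div_div, mul_comm (den k m) ((L:ℝ)+1)]
  · apply Summable.of_nonneg_of_le
      (fun m => integral_nonneg fun t => norm_nonneg _) (fun m => ?_)
      (summable_term k h0 h1)
    have hD := den_pos k m
    obtain ⟨L, hL'⟩ : ∃ L, lastVal m = L + 1 :=
      ⟨lastVal m - 1, by have := lastVal_pos m; omega⟩
    have hb := int_norm_le h0
      (((continuous_pow (lastVal m - 1)).div_const (den k m)).norm.integrableOn_Ioc)
      (C := z ^ (lastVal m - 1) / den k m) ?_
    · calc _ ≤ z ^ (lastVal m - 1) / den k m * z := hb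
        _ = term k z m := by
            unfold term
            rw [hL', Nat.add_sub_cancel, pow_succ]
            ring
    · intro t ht
      rw [Real.norm_eq_abs, abs_of_nonneg (div_nonneg (pow_nonneg ht.1.le _) hD.le)]
      gcongr <;> first
        | exact ht.1.le
        | exact ht.2

/-! ### appending a final exponent 1 -/

lemma summable_snoc {r : ℕ} (k : Fin (r+1) → ℕ) {z : ℝ} (h0 : 0 ≤ z) (h1 : z < 1) :
    Summable (fun p : Incr r × ℕ => term k z (snocIncr p.1 p.2)) := by
  have := (Equiv.summable_iff (incrEquiv r).symm).2 (summable_term k h0 h1)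
  exact this

lemma LiF_snoc_one {r : ℕ} (k : Fin r → ℕ) {z : ℝ} (h0 : 0 ≤ z) (h1 : z < 1) :
    LiF (Fin.snoc k 1) z = ∫ t in (0:ℝ)..z, (1-t)⁻¹ * LiF k t := by
  rw [intervalIntegral.integral_of_le h0]
  -- rewrite the integrand as a tsum
  have hstep : ∀ t ∈ Ioc (0:ℝ) z, (1-t)⁻¹ * LiF k t
      = ∑' m : Incr r, t ^ lastVal m * (1-t)⁻¹ / den k m := by
    intro t ht
    rw [LiF_eq, ← tsum_mul_left]
    apply tsum_congr
    intro m
    unfold term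
    ring
  rw [setIntegral_congr_fun measurableSet_Ioc hstep]
  -- integrability and summability for the swap
  have hint : ∀ m : Incr r, IntegrableOn
      (fun t => t ^ lastVal m * (1-t)⁻¹ / den k m) (Ioc (0:ℝ) z) volume := by
    intro m
    apply (ContinuousOn.integrableOn_compact isCompact_Icc ?_).mono_set Ioc_subset_Icc_self
    apply ContinuousOn.div_const
    apply (continuous_pow _).continuousOn.mul
    apply ContinuousOn.inv₀ (continuousOn_const.sub continuousOn_id)
    intro t ht
    apply sub_ne_zero.2
    exact ne_of_gt (lt_of_le_of_lt ht.2 h1)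
  have hswap := MeasureTheory.integral_tsum_of_summable_integral_norm hint ?_
  · rw [← hswap]
    -- now compute each integral via the geometric series
    have hterm : ∀ m : Incr r, ∫ t in Ioc (0:ℝ) z, t ^ lastVal m * (1-t)⁻¹ / den k m
        = ∑' e : ℕ, z ^ (lastVal m + 1 + e) / (lastVal m + 1 + e) / den k m := by
      intro m
      rw [MeasureTheory.integral_div, geom_int (lastVal m) h0 h1, tsum_div_const]
    calc LiF (Fin.snoc k 1) z
        = ∑' p : Incr r × ℕ, term (Fin.snoc k 1) z (snocIncr p.1 p.2) := by
          rw [LiF_eq]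
          exact (Equiv.tsum_eq (incrEquiv r).symm (term (Fin.snoc k 1) z)).symm
      _ = ∑' m : Incr r, ∑' e : ℕ, term (Fin.snoc k 1) z (snocIncr m e) := by
          apply Summable.tsum_prod' (summable_snoc _ h0 h1)
          exact fun m => (summable_snoc (Fin.snoc k 1) h0 h1).prod_factor m
      _ = ∑' m : Incr r, ∑' e : ℕ,
            z ^ (lastVal m + 1 + e) / (lastVal m + 1 + e) / den k m := by
          apply tsum_congr; intro m
          apply tsum_congr; intro e
          unfold term
          rw [lastVal_snoc, den_snoc]
          have he : (Fin.snoc k 1 : Fin (r+1) → ℕ) (Fin.last r) = 1 := by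
            rw [Fin.snoc_last]
          have hini : (fun i : Fin r => (Fin.snoc k 1 : Fin (r+1) → ℕ) i.castSucc) = k := by
            funext i; rw [Fin.snoc_castSucc]
          rw [he, hini, pow_one]
          push_cast
          rw [div_div]
          rw [mul_comm (den k m) ((lastVal m : ℝ) + 1 + (e:ℝ)), ← div_div]
      _ = ∑' m : Incr r, ∫ t in Ioc (0:ℝ) z, t ^ lastVal m * (1-t)⁻¹ / den k m := by
          apply tsum_congr; intro m
          rw [hterm m]
  · -- summability of the integral norms
    apply Summable.of_nonneg_of_le
      (fun m => integral_nonneg fun t => norm_nonneg _) (fun m => ?_)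
      ((summable_term k h0 h1).mul_right ((1-z)⁻¹ * z))
    have hD := den_pos k m
    have h1z : (0:ℝ) < 1 - z := by linarith
    calc ∫ t in Ioc (0:ℝ) z, ‖t ^ lastVal m * (1-t)⁻¹ / den k m‖
        ≤ z ^ lastVal m * (1-z)⁻¹ / den k m * z := by
          apply int_norm_le h0 ((hint m).norm)
          intro t ht
          have ht1 : t < 1 := lt_of_le_of_lt ht.2 h1
          have h1t : (0:ℝ) < 1 - t := by linarith
          rw [Real.norm_eq_abs, abs_of_nonneg (div_nonneg
            (mul_nonneg (pow_nonneg ht.1.le _) (inv_nonneg.2 h1t.le)) hD.le)]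
          gcongr <;> first
            | exact one_le_den k m
            | exact ht.1.le
            | exact ht.2
            | linarith
      _ = term k z m * ((1-z)⁻¹ * z) := by
          unfold term
          ring

/-! ### list-level recursions -/

lemma LiF_congr {r r' : ℕ} (h : r' = r) (k : Fin r → ℕ) (k' : Fin r' → ℕ)
    (hk : ∀ i : Fin r', k' i = k (Fin.cast h i)) (z : ℝ) : LiF k' z = LiF k z := by
  subst h
  have : k' = k := funext fun i => by simpa using hk i
  rw [this]

lemma LiL_nil (z : ℝ) : LiL [] z = 1 := LiF_zero _ z

lemma LiL_append_singleton (m : List ℕ) (q : ℕ) (z : ℝ) :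
    LiL (m ++ [q]) z = LiF (Fin.snoc (fun i => m.get i) q) z := by
  unfold LiL
  apply LiF_congr (by simp) _ _ (fun i => ?_) z
  by_cases hi : (i : ℕ) < m.length
  · have h1 : Fin.cast (by simp : (m ++ [q]).length = m.length + 1) i
        = Fin.castSucc ⟨i.1, hi⟩ := by
      ext; simp
    rw [h1, Fin.snoc_castSucc]
    show (m ++ [q]).get i = m.get ⟨i.1, hi⟩
    simp [List.get_eq_getElem, List.getElem_append_left hi]
  · have hi' : (i : ℕ) = m.length := by
      have := i.2
      simp at this
      omega
    have h1 : Fin.cast (by simp : (m ++ [q]).length = m.length + 1) i = Fin.last m.length := by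
      ext; simp [hi']
    rw [h1, Fin.snoc_last]
    show (m ++ [q]).get i = q
    simp only [List.get_eq_getElem]
    exact List.getElem_concat_length hi' _

lemma LiL_last_one (m : List ℕ) {z : ℝ} (h0 : 0 ≤ z) (h1 : z < 1) :
    LiL (m ++ [1]) z = ∫ t in (0:ℝ)..z, (1-t)⁻¹ * LiL m t := by
  rw [LiL_append_singleton, LiF_snoc_one _ h0 h1]
  rfl

lemma LiL_last_succ (m : List ℕ) (q : ℕ) {z : ℝ} (h0 : 0 ≤ z) (h1 : z < 1) :
    LiL (m ++ [q+2]) z = ∫ t in (0:ℝ)..z, t⁻¹ * LiL (m ++ [q+1]) t := by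
  rw [LiL_append_singleton]
  have hupd : (Fin.snoc (fun i => m.get i) (q+2) : Fin (m.length + 1) → ℕ)
      = Function.update (Fin.snoc (fun i => m.get i) (q+1)) (Fin.last m.length)
          ((Fin.snoc (fun i => m.get i) (q+1) : Fin (m.length+1) → ℕ) (Fin.last m.length) + 1) := by
    funext i
    by_cases hi : i = Fin.last m.length
    · subst hi
      rw [Fin.snoc_last, Function.update_self, Fin.snoc_last]
    · obtain ⟨i0, rfl⟩ := Fin.exists_castSucc_eq.2 hi
      rw [Fin.snoc_castSucc, Function.update_of_ne hi, Fin.snoc_castSucc]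
  rw [hupd, LiF_update _ h0 h1]
  have h2 : ∀ t, LiF (Fin.snoc (fun i => m.get i) (q+1) : Fin (m.length+1) → ℕ) t
      = LiL (m ++ [q+1]) t := fun t => (LiL_append_singleton m (q+1) t).symm
  simp only [h2]

/-! ### words and reversals -/

lemma word_append_singleton (m : List ℕ) (q : ℕ) :
    word (m ++ [q]) = word m ++ (true :: List.replicate (q-1) false) := by
  unfold word
  rw [List.flatMap_append]
  simp

lemma word_rev_one (m : List ℕ) :
    (word (m ++ [1])).reverse = true :: (word m).reverse := by
  rw [word_append_singleton]
  simp

lemma word_rev_succ (m : List ℕ) (q : ℕ) :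
    (word (m ++ [q+2])).reverse = false :: (word (m ++ [q+1])).reverse := by
  rw [word_append_singleton, word_append_singleton]
  show (word m ++ (true :: List.replicate (q+1) false)).reverse
    = false :: (word m ++ (true :: List.replicate q false)).reverse
  rw [List.replicate_succ' (n := q) (a := false)]
  simp [List.reverse_append]

/-- The multi-polylogarithm as an iterated integral. -/
lemma LiL_eq_J : ∀ (m : List ℕ), (∀ x ∈ m, 0 < x) → ∀ z : ℝ, 0 ≤ z → z < 1 →
    LiL m z = J ((word m).reverse) z := by
  intro m
  induction m using List.reverseRecOn with
  | nil =>
    intro _ z _ _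
    rw [LiL_nil]
    show (1:ℝ) = J ([].reverse) z
    rfl
  | append_singleton m q ihm =>
    intro hpos z hz0 hz1
    have hq : 0 < q := hpos q (by simp)
    have hm : ∀ x ∈ m, 0 < x := fun x hx => hpos x (by simp [hx])
    obtain ⟨q', rfl⟩ : ∃ q', q = q' + 1 := ⟨q - 1, by omega⟩
    clear hq hpos
    induction q' generalizing z with
    | zero =>
      rw [LiL_last_one m hz0 hz1, word_rev_one, J_cons]
      apply intervalIntegral.integral_congr
      intro t ht
      rw [uIcc_of_le hz0] at ht
      dsimp only
      have hfb : fB true t = (1-t)⁻¹ := rfl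
      rw [hfb, ihm hm t ht.1 (lt_of_le_of_lt ht.2 hz1)]
    | succ p ihp =>
      rw [LiL_last_succ m p hz0 hz1, word_rev_succ, J_cons]
      apply intervalIntegral.integral_congr
      intro t ht
      rw [uIcc_of_le hz0] at ht
      dsimp only
      have hfb : fB false t = t⁻¹ := rfl
      rw [hfb, ihp t ht.1 (lt_of_le_of_lt ht.2 hz1)]


lemma word_rev_Adm (k : List ℕ) : Adm ((word k).reverse) := by
  cases k with
  | nil => exact Adm_nil
  | cons a t =>
    right
    rw [List.getLast?_reverse, word_cons]
    rfl

/-- Shuffle relation `Li(k;z)·Li(l;z) = Li(k ш l;z)` for `0 < z < 1`. -/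
theorem stmt6 (z : ℝ) (hz0 : 0 < z) (hz1 : z < 1) (k l : List ℕ)
    (hk : ∀ x ∈ k, 0 < x) (hl : ∀ x ∈ l, 0 < x) :
    LiL k z * LiL l z = ((sh (word k) (word l)).map (fun u => LiL (toIndex u) z)).sum := by
  have hz0' : (0:ℝ) ≤ z := hz0.le
  rw [LiL_eq_J k hk z hz0' hz1, LiL_eq_J l hl z hz0' hz1,
    J_shuffle _ _ (word_rev_Adm k) (word_rev_Adm l) z hz0' hz1]
  have hmap : ∀ u ∈ sh (word k) (word l), LiL (toIndex u) z = J u.reverse z := by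
    intro u hu
    have hhead : u = [] ∨ u.head? = some true := by
      rcases sh_head hu with h | h
      · cases k with
        | nil =>
          left
          rw [show word ([] : List ℕ) = [] from rfl] at h
          simpa [List.head?_eq_none_iff] using h
        | cons a t =>
          right
          rw [word_cons] at h
          exact h
      · cases l with
        | nil =>
          left
          rw [show word ([] : List ℕ) = [] from rfl] at h
          simpa [List.head?_eq_none_iff] using h
        | cons a t =>
          right
          rw [word_cons] at h
          exact h
    have hW := word_toIndex u hhead
    rw [LiL_eq_J (toIndex u) (toIndex_pos u) z hz0' hz1, hW]
  rw [List.map_congr_left hmap,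
    show (fun u => J u.reverse z) = ((fun u => J u z) ∘ List.reverse) from rfl,
    ← List.map_map]
  exact (List.Perm.sum_eq ((sh_reverse_perm (word k) (word l)).map (fun u => J u z))).symm

end MZVPaper
end

section
/- Functional equation for the depth-one polylogarithm: for 0 < z < 1 and integer k ≥ 2, Li(k;1−z) = (−1)^{k−1} ∑_{i=1}^{k−1} Li({1}^{i−1},2,{1}^{k−1−i};z) + ∑_{j=0}^{k−2} (−1)^j ζ(k−j) Li({1}^j;z) − (−1)^{k−1} log(z)·Li({1}^{k−1};z). -/
open scoped BigOperators

namespace MZVPaper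

section Aux
open Filter Topology

namespace Aux

/-- snoc for exponent functions -/
def sf {r : ℕ} (k : Fin r → ℕ) (s : ℕ) : Fin (r + 1) → ℕ :=
  fun j => if h : (j : ℕ) < r then k ⟨j, h⟩ else s

@[simp] lemma sf_lt {r : ℕ} (k : Fin r → ℕ) (s : ℕ) (j : Fin (r+1)) (h : (j : ℕ) < r) :
    sf k s j = k ⟨j, h⟩ := dif_pos h

@[simp] lemma sf_last {r : ℕ} (k : Fin r → ℕ) (s : ℕ) :
    sf k s (Fin.last r) = s := dif_neg (by simp)

/-- last value of an increasing tuple (0 if empty) -/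
def lastv {r : ℕ} (m : Incr r) : ℕ :=
  if h : 0 < r then m.1 ⟨r - 1, Nat.sub_lt h Nat.one_pos⟩ else 0

lemma LiF_eq {r : ℕ} (k : Fin r → ℕ) (z : ℝ) :
    LiF k z = ∑' m : Incr r, z ^ lastv m / ∏ i, (m.1 i : ℝ) ^ k i := by
  unfold LiF lastv
  refine tsum_congr fun m => ?_
  by_cases h : 0 < r
  · simp [h]
  · simp [h]

lemma incr_le {r : ℕ} (m : Incr r) (j : ℕ) (h : j < r) : j + 1 ≤ m.1 ⟨j, h⟩ := by
  induction j with
  | zero => exact m.2.2 _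
  | succ n ih =>
      have h' : n < r := Nat.lt_of_succ_lt h
      have := m.2.1 (show (⟨n, h'⟩ : Fin r) < ⟨n+1, h⟩ by simp [Fin.lt_def])
      have hn := ih h'
      omega

lemma lastv_pos {r : ℕ} (m : Incr (r + 1)) : 0 < lastv m := by
  unfold lastv
  rw [dif_pos (Nat.succ_pos r)]
  exact m.2.2 _

lemma le_lastv {r : ℕ} (h : 0 < r) (m : Incr r) : r ≤ lastv m := by
  unfold lastv
  rw [dif_pos h]
  have := incr_le m (r - 1) (Nat.sub_lt h Nat.one_pos)
  omega

lemma incr_lt_lastv {r : ℕ} (m : Incr r) (j : Fin r) (hj : (j : ℕ) < r - 1) :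
    m.1 j < lastv m := by
  have h : 0 < r := j.pos
  unfold lastv
  rw [dif_pos h]
  exact m.2.1 (by simp [Fin.lt_def]; omega)

instance : Unique (Incr 0) :=
  ⟨⟨⟨finZeroElim, fun i => i.elim0, fun i => i.elim0⟩⟩,
    fun m => Subtype.ext (funext fun i => i.elim0)⟩

lemma one_le_prod {r : ℕ} (k : Fin r → ℕ) (m : Incr r) :
    (1 : ℝ) ≤ ∏ i, (m.1 i : ℝ) ^ k i := by
  have : (1:ℝ) = ∏ _i : Fin r, (1:ℝ) := by simp
  rw [this]
  refine Finset.prod_le_prod (fun i _ => zero_le_one) fun i _ => one_le_pow₀ ?_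
  exact_mod_cast m.2.2 i

lemma prod_pos {r : ℕ} (k : Fin r → ℕ) (m : Incr r) :
    (0 : ℝ) < ∏ i, (m.1 i : ℝ) ^ k i :=
  lt_of_lt_of_le one_pos (one_le_prod k m)


lemma apply_le_lastv {r : ℕ} (m : Incr r) (j : ℕ) (h : j < r) : m.1 ⟨j, h⟩ ≤ lastv m := by
  unfold lastv
  rw [dif_pos (show 0 < r by omega)]
  rcases eq_or_lt_of_le (show j ≤ r - 1 by omega) with he | hl
  · subst he; rfl
  · exact le_of_lt (m.2.1 (show (⟨j, h⟩ : Fin r) < ⟨r-1, by omega⟩ from hl))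

/-- extend an increasing tuple by one value above the last -/
def extFn {r : ℕ} (m : Incr r) (t : ℕ) : Fin (r + 1) → ℕ :=
  fun j => if h : (j : ℕ) < r then m.1 ⟨j, h⟩ else lastv m + t + 1

lemma extFn_lt {r : ℕ} (m : Incr r) (t : ℕ) (j : Fin (r+1)) (h : (j : ℕ) < r) :
    extFn m t j = m.1 ⟨j, h⟩ := dif_pos h

lemma extFn_ge {r : ℕ} (m : Incr r) (t : ℕ) (j : Fin (r+1)) (h : ¬ (j : ℕ) < r) :
    extFn m t j = lastv m + t + 1 := dif_neg h

lemma strictMono_extFn {r : ℕ} (m : Incr r) (t : ℕ) : StrictMono (extFn m t) := by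
  intro a b hab
  rw [Fin.lt_def] at hab
  by_cases hb : (b : ℕ) < r
  · have ha : (a : ℕ) < r := lt_trans hab hb
    rw [extFn_lt _ _ _ ha, extFn_lt _ _ _ hb]
    exact m.2.1 (show (⟨a, ha⟩ : Fin r) < ⟨b, hb⟩ from hab)
  · rw [extFn_ge _ _ _ hb]
    by_cases ha : (a : ℕ) < r
    · rw [extFn_lt _ _ _ ha]
      have := apply_le_lastv m a ha
      omega
    · exfalso
      have := a.isLt
      have := b.isLt
      omega

def extIncr {r : ℕ} (m : Incr r) (t : ℕ) : Incr (r + 1) :=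
  ⟨extFn m t, strictMono_extFn m t, by
    intro j
    by_cases h : (j : ℕ) < r
    · rw [extFn_lt _ _ _ h]; exact m.2.2 _
    · rw [extFn_ge _ _ _ h]; omega⟩

def initFn {r : ℕ} (m : Incr (r + 1)) : Incr r :=
  ⟨fun i => m.1 i.castSucc, fun a b hab => m.2.1 (Fin.castSucc_lt_castSucc_iff.2 hab),
    fun i => m.2.2 _⟩

lemma initFn_extIncr {r : ℕ} (m : Incr r) (t : ℕ) : initFn (extIncr m t) = m := by
  refine Subtype.ext (funext fun i => ?_)
  show extFn m t i.castSucc = m.1 i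
  rw [extFn_lt _ _ _ (show ((i.castSucc : Fin (r+1)) : ℕ) < r by simp)]
  exact congrArg m.1 (Fin.ext (by simp))

lemma extIncr_last {r : ℕ} (m : Incr r) (t : ℕ) :
    (extIncr m t).1 (Fin.last r) = lastv m + t + 1 := extFn_ge m t _ (by simp)

lemma lastv_succ {r : ℕ} (m : Incr (r + 1)) : lastv m = m.1 (Fin.last r) := by
  unfold lastv
  rw [dif_pos (Nat.succ_pos r)]
  rfl

lemma lastv_extIncr {r : ℕ} (m : Incr r) (t : ℕ) :
    lastv (extIncr m t) = lastv m + t + 1 := by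
  rw [lastv_succ, extIncr_last]

lemma lastv_initFn_lt {r : ℕ} (m : Incr (r + 1)) :
    lastv (initFn m) < m.1 (Fin.last r) := by
  by_cases h : 0 < r
  · unfold lastv
    rw [dif_pos h]
    refine m.2.1 (show (Fin.castSucc ⟨r-1, by omega⟩ : Fin (r+1)) < Fin.last r from ?_)
    rw [Fin.lt_def]
    simp
    omega
  · unfold lastv
    rw [dif_neg h]
    exact m.2.2 _

/-- append one value strictly above the last -/
def lastEquiv (r : ℕ) : (Incr r × ℕ) ≃ Incr (r + 1) where
  toFun p := extIncr p.1 p.2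
  invFun m := (initFn m, m.1 (Fin.last r) - lastv (initFn m) - 1)
  left_inv p := by
    obtain ⟨m, t⟩ := p
    refine Prod.ext ?_ ?_
    · exact initFn_extIncr m t
    · show (extIncr m t).1 (Fin.last r) - lastv (initFn (extIncr m t)) - 1 = t
      rw [extIncr_last, initFn_extIncr]
      omega
  right_inv m := by
    refine Subtype.ext (funext fun j => ?_)
    show extFn (initFn m) (m.1 (Fin.last r) - lastv (initFn m) - 1) j = m.1 j
    by_cases h : (j : ℕ) < r
    · rw [extFn_lt _ _ _ h]
      exact congrArg m.1 (Fin.ext (by simp))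
    · rw [extFn_ge _ _ _ h]
      have hj : j = Fin.last r := by
        ext
        have := j.isLt
        simp
        omega
      subst hj
      have := lastv_initFn_lt m
      omega

lemma lastv_lastEquiv {r : ℕ} (p : Incr r × ℕ) :
    lastv ((lastEquiv r) p) = lastv p.1 + p.2 + 1 := lastv_extIncr p.1 p.2

lemma lastEquiv_apply_castSucc {r : ℕ} (p : Incr r × ℕ) (i : Fin r) :
    ((lastEquiv r) p).1 i.castSucc = p.1.1 i := by
  show extFn p.1 p.2 i.castSucc = p.1.1 i
  rw [extFn_lt _ _ _ (show ((i.castSucc : Fin (r+1)) : ℕ) < r by simp)]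
  exact congrArg p.1.1 (Fin.ext (by simp))

lemma lastEquiv_apply_last {r : ℕ} (p : Incr r × ℕ) :
    ((lastEquiv r) p).1 (Fin.last r) = lastv p.1 + p.2 + 1 := extIncr_last p.1 p.2


lemma summable_geom_lastv : ∀ (r : ℕ) {b : ℝ}, 0 ≤ b → b < 1 →
    Summable (fun m : Incr r => b ^ lastv m)
  | 0, b, hb0, hb1 => Summable.of_finite
  | (r + 1), b, hb0, hb1 => by
      have ih := summable_geom_lastv r hb0 hb1
      rw [← (lastEquiv r).summable_iff]
      have heq : ((fun m : Incr (r+1) => b ^ lastv m) ∘ (lastEquiv r))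
          = fun p : Incr r × ℕ => b ^ lastv p.1 * (b ^ p.2 * b) := by
        funext p
        show b ^ lastv ((lastEquiv r) p) = _
        rw [lastv_lastEquiv]
        ring
      rw [heq]
      exact ih.mul_of_nonneg ((summable_geometric_of_lt_one hb0 hb1).mul_right b)
        (fun m => pow_nonneg hb0 _) (fun t => mul_nonneg (pow_nonneg hb0 _) hb0)

lemma summable_dominated {r : ℕ} {f : Incr r → ℝ} {b C : ℝ} (hb0 : 0 ≤ b) (hb1 : b < 1)
    (h : ∀ m, |f m| ≤ C * b ^ lastv m) : Summable f :=
  Summable.of_norm_bounded ((summable_geom_lastv r hb0 hb1).mul_left C) h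

lemma summable_LiF_terms {r : ℕ} (k : Fin r → ℕ) {z : ℝ} (hz : |z| < 1) :
    Summable (fun m : Incr r => z ^ lastv m / ∏ i, (m.1 i : ℝ) ^ k i) := by
  refine summable_dominated (C := 1) (abs_nonneg z) hz fun m => ?_
  rw [one_mul, abs_div, abs_pow]
  have hP : (1:ℝ) ≤ |∏ i, (m.1 i : ℝ) ^ k i| := by
    rw [abs_of_pos (prod_pos k m)]
    exact one_le_prod k m
  exact div_le_self (pow_nonneg (abs_nonneg z) _) hP

lemma exists_bound_of_tendsto {a : ℕ → ℝ} (h : Tendsto a atTop (𝓝 0)) :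
    ∃ C, ∀ n, a n ≤ C := by
  obtain ⟨N, hN⟩ := Filter.eventually_atTop.1 (h.eventually_lt_const one_pos)
  refine ⟨(∑ n ∈ Finset.range N, |a n|) + 1, fun n => ?_⟩
  by_cases hn : n < N
  · calc a n ≤ |a n| := le_abs_self _
      _ ≤ ∑ m ∈ Finset.range N, |a m| :=
          Finset.single_le_sum (f := fun m => |a m|) (fun m _ => abs_nonneg _)
            (Finset.mem_range.2 hn)
      _ ≤ _ := by linarith
  · have h1 := hN n (by omega)
    have h2 : 0 ≤ ∑ m ∈ Finset.range N, |a m| := Finset.sum_nonneg fun m _ => abs_nonneg _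
    linarith

lemma exists_geom_bound {b c : ℝ} (hb0 : 0 ≤ b) (hbc : b < c) (hc1 : c < 1) :
    ∃ C : ℝ, 0 ≤ C ∧ ∀ n : ℕ, (n : ℝ) * b ^ (n - 1) ≤ C * c ^ n := by
  have hc0 : 0 < c := lt_of_le_of_lt hb0 hbc
  have hr1 : |b / c| < 1 := by
    rw [abs_of_nonneg (div_nonneg hb0 hc0.le)]
    rw [div_lt_one hc0]
    exact hbc
  have hsum : Summable (fun n : ℕ => (n : ℝ) ^ 1 * (b / c) ^ n) :=
    summable_pow_mul_geometric_of_norm_lt_one 1 hr1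
  have hsum2 : Summable (fun n : ℕ => (b / c) ^ n) :=
    summable_geometric_of_lt_one (div_nonneg hb0 hc0.le) (by rwa [abs_of_nonneg (div_nonneg hb0 hc0.le)] at hr1)
  have htend : Tendsto (fun n : ℕ => ((n : ℝ) + 1) * (b / c) ^ n) atTop (𝓝 0) := by
    have := (hsum.tendsto_atTop_zero.add hsum2.tendsto_atTop_zero)
    simp only [add_zero] at this
    refine this.congr fun n => ?_
    ring
  obtain ⟨C₀, hC₀⟩ := exists_bound_of_tendsto htend
  refine ⟨max (C₀ / c) 0, le_max_right _ _, fun n => ?_⟩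
  cases n with
  | zero => simpa using le_max_right (C₀ / c) 0
  | succ n =>
      have h1 : ((n : ℝ) + 1) * (b / c) ^ n ≤ C₀ := hC₀ n
      have h2 : ((n : ℝ) + 1) * b ^ n ≤ C₀ * c ^ n := by
        have hcn : (0:ℝ) < c ^ n := pow_pos hc0 n
        have := mul_le_mul_of_nonneg_right h1 hcn.le
        calc ((n:ℝ)+1) * b ^ n = ((n:ℝ)+1) * (b/c) ^ n * c ^ n := by
              rw [div_pow]
              field_simp
          _ ≤ C₀ * c ^ n := this
      calc ((n+1 : ℕ) : ℝ) * b ^ ((n+1) - 1) = ((n:ℝ)+1) * b ^ n := by push_cast; simp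
        _ ≤ C₀ * c ^ n := h2
        _ = (C₀ / c) * c ^ (n+1) := by
              rw [pow_succ]
              field_simp
        _ ≤ max (C₀ / c) 0 * c ^ (n+1) :=
              mul_le_mul_of_nonneg_right (le_max_left _ _) (pow_pos hc0 _).le


lemma hasDerivAt_LiF {r : ℕ} (k : Fin (r+1) → ℕ) {z : ℝ} (hz : |z| < 1) :
    HasDerivAt (LiF k)
      (∑' m : Incr (r+1), (lastv m : ℝ) * z ^ (lastv m - 1) / ∏ i, (m.1 i : ℝ) ^ k i) z := by
  set b := (|z| + 1) / 2 with hbdef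
  have habs : 0 ≤ |z| := abs_nonneg z
  have hb0 : 0 ≤ b := by positivity
  have hb1 : b < 1 := by rw [hbdef]; linarith
  have hzb : |z| < b := by rw [hbdef]; linarith
  set c := (b + 1) / 2 with hcdef
  have hbc : b < c := by rw [hcdef]; linarith
  have hc1 : c < 1 := by rw [hcdef]; linarith
  obtain ⟨C, hC0, hC⟩ := exists_geom_bound hb0 hbc hc1
  have hu : Summable (fun m : Incr (r+1) => C * c ^ lastv m) :=
    (summable_geom_lastv (r+1) (le_trans hb0 hbc.le) hc1).mul_left C
  have main := hasDerivAt_tsum_of_isPreconnected (u := fun m : Incr (r+1) => C * c ^ lastv m)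
      (t := Set.Ioo (-b) b)
      (g := fun (m : Incr (r+1)) (y : ℝ) => y ^ lastv m / ∏ i, (m.1 i : ℝ) ^ k i)
      (g' := fun (m : Incr (r+1)) (y : ℝ) =>
        (lastv m : ℝ) * y ^ (lastv m - 1) / ∏ i, (m.1 i : ℝ) ^ k i)
      (y₀ := 0) (y := z)
      hu isOpen_Ioo (convex_Ioo _ _).isPreconnected
      (fun m y _ => (hasDerivAt_pow (lastv m) y).div_const _)
      (fun m y hy => ?_) (by constructor <;> [linarith; linarith]) ?_
      (by constructor <;> [linarith [neg_abs_le z]; linarith [le_abs_self z]])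
  · have hfun : (fun w => ∑' m : Incr (r+1), w ^ lastv m / ∏ i, (m.1 i : ℝ) ^ k i)
        = LiF k := funext fun w => (LiF_eq k w).symm
    rwa [hfun] at main
  · -- derivative bound
    have hy' : |y| ≤ b := by
      rw [abs_le]
      exact ⟨hy.1.le, hy.2.le⟩
    have hP : (1:ℝ) ≤ |∏ i, (m.1 i : ℝ) ^ k i| := by
      rw [abs_of_pos (prod_pos k m)]
      exact one_le_prod k m
    have h1 : ‖(lastv m : ℝ) * y ^ (lastv m - 1) / ∏ i, (m.1 i : ℝ) ^ k i‖
        ≤ (lastv m : ℝ) * |y| ^ (lastv m - 1) := by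
      rw [Real.norm_eq_abs, abs_div, abs_mul, abs_pow, Nat.abs_cast]
      exact div_le_self (by positivity) hP
    refine le_trans h1 (le_trans ?_ (hC (lastv m)))
    have : |y| ^ (lastv m - 1) ≤ b ^ (lastv m - 1) := pow_le_pow_left₀ (abs_nonneg y) hy' _
    exact mul_le_mul_of_nonneg_left this (Nat.cast_nonneg _)
  · -- summable at 0
    have h0 : (fun m : Incr (r+1) => (0:ℝ) ^ lastv m / ∏ i, (m.1 i : ℝ) ^ k i)
        = fun _ => (0:ℝ) := by
      funext m
      rw [zero_pow (by have := lastv_pos m; omega), zero_div]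
    rw [h0]
    exact summable_zero


lemma sf_castSucc {r : ℕ} (k : Fin r → ℕ) (s : ℕ) (i : Fin r) :
    sf k s i.castSucc = k i := by
  rw [sf_lt _ _ _ (show ((i.castSucc : Fin (r+1)) : ℕ) < r by simp)]
  exact congrArg k (Fin.ext (by simp))

lemma prod_sf {r : ℕ} (k : Fin r → ℕ) (s : ℕ) (m : Incr (r+1)) :
    ∏ i, (m.1 i : ℝ) ^ sf k s i
      = (∏ i : Fin r, (m.1 i.castSucc : ℝ) ^ k i) * (lastv m : ℝ) ^ s := by
  rw [Fin.prod_univ_castSucc, lastv_succ, sf_last]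
  congr 1
  exact Finset.prod_congr rfl fun i _ => by rw [sf_castSucc]

lemma tsum_deriv_sf_ge_one {r : ℕ} (k : Fin r → ℕ) {s : ℕ} (hs : 1 ≤ s) {z : ℝ} (hz : z ≠ 0) :
    ∑' m : Incr (r+1), (lastv m : ℝ) * z ^ (lastv m - 1) / ∏ i, (m.1 i : ℝ) ^ sf k s i
      = LiF (sf k (s-1)) z / z := by
  rw [LiF_eq, div_eq_mul_inv, ← tsum_mul_right]
  refine tsum_congr fun m => ?_
  have hn : 1 ≤ lastv m := lastv_pos m
  have hncast : (0:ℝ) < (lastv m : ℝ) := by exact_mod_cast hn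
  set P := ∏ i : Fin r, (m.1 i.castSucc : ℝ) ^ k i with hPdef
  have hP : (0:ℝ) < P := by
    rw [hPdef]
    refine Finset.prod_pos fun i _ => pow_pos ?_ _
    exact_mod_cast m.2.2 _
  rw [prod_sf, prod_sf]
  have hzp : z ^ lastv m = z ^ (lastv m - 1) * z := by
    rw [← pow_succ]
    congr 1
    omega
  have hns : (lastv m : ℝ) ^ s = (lastv m : ℝ) ^ (s - 1) * (lastv m : ℝ) := by
    rw [← pow_succ]
    congr 1
    omega
  rw [hzp, hns]
  field_simp

lemma tsum_deriv_sf_one {r : ℕ} (k : Fin r → ℕ) {z : ℝ} (h0 : 0 ≤ z) (h1 : z < 1) :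
    ∑' m : Incr (r+1), (lastv m : ℝ) * z ^ (lastv m - 1) / ∏ i, (m.1 i : ℝ) ^ sf k 1 i
      = LiF k z / (1 - z) := by
  rw [← (lastEquiv r).tsum_eq]
  have hterm : ∀ p : Incr r × ℕ,
      (lastv ((lastEquiv r) p) : ℝ) * z ^ (lastv ((lastEquiv r) p) - 1) /
          ∏ i, (((lastEquiv r) p).1 i : ℝ) ^ sf k 1 i
        = (z ^ lastv p.1 / ∏ i, (p.1.1 i : ℝ) ^ k i) * z ^ p.2 := by
    intro p
    rw [prod_sf, lastv_lastEquiv]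
    have hprodeq : (∏ i : Fin r, (((lastEquiv r) p).1 i.castSucc : ℝ) ^ k i)
        = ∏ i : Fin r, (p.1.1 i : ℝ) ^ k i :=
      Finset.prod_congr rfl fun i _ => by rw [lastEquiv_apply_castSucc]
    rw [hprodeq]
    set q := lastv p.1
    set t := p.2
    have hP : (0:ℝ) < ∏ i : Fin r, (p.1.1 i : ℝ) ^ k i := prod_pos k p.1
    have hsub : q + t + 1 - 1 = q + t := by omega
    have hcast : ((q + t + 1 : ℕ) : ℝ) = (q : ℝ) + t + 1 := by push_cast; ring
    rw [hsub, hcast, pow_one]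
    have hne : (q : ℝ) + t + 1 ≠ 0 := by positivity
    rw [pow_add]
    field_simp
  rw [tsum_congr hterm]
  have hA : Summable (fun m : Incr r => z ^ lastv m / ∏ i, (m.1 i : ℝ) ^ k i) :=
    summable_LiF_terms k (by rw [abs_of_nonneg h0]; exact h1)
  have hw : Summable (fun t : ℕ => z ^ t) := summable_geometric_of_lt_one h0 h1
  have hprod : Summable (fun p : Incr r × ℕ =>
      (z ^ lastv p.1 / ∏ i, (p.1.1 i : ℝ) ^ k i) * z ^ p.2) :=
    hA.mul_of_nonneg hw
      (fun m => div_nonneg (pow_nonneg h0 _) (prod_pos k m).le)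
      (fun t => pow_nonneg h0 _)
  rw [Summable.tsum_prod hprod]
  have hinner : ∀ m : Incr r,
      ∑' t : ℕ, (z ^ lastv m / ∏ i, (m.1 i : ℝ) ^ k i) * z ^ t
        = (z ^ lastv m / ∏ i, (m.1 i : ℝ) ^ k i) * (1 - z)⁻¹ := by
    intro m
    rw [tsum_mul_left, tsum_geometric_of_lt_one h0 h1]
  rw [tsum_congr hinner, tsum_mul_right, LiF_eq, div_eq_mul_inv]

lemma hasDerivAt_LiF_sf_one {r : ℕ} (k : Fin r → ℕ) {z : ℝ} (h0 : 0 ≤ z) (h1 : z < 1) :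
    HasDerivAt (LiF (sf k 1)) (LiF k z / (1 - z)) z := by
  have h := hasDerivAt_LiF (sf k 1) (by rw [abs_of_nonneg h0]; exact h1)
  rwa [tsum_deriv_sf_one k h0 h1] at h

lemma hasDerivAt_LiF_sf_ge {r : ℕ} (k : Fin r → ℕ) {s : ℕ} (hs : 1 ≤ s) {z : ℝ}
    (h0 : 0 < z) (h1 : z < 1) :
    HasDerivAt (LiF (sf k s)) (LiF (sf k (s-1)) z / z) z := by
  have h := hasDerivAt_LiF (sf k s) (by rw [abs_of_nonneg h0.le]; exact h1)
  rwa [tsum_deriv_sf_ge_one k hs (ne_of_gt h0)] at h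


lemma LiF_congr {r r' : ℕ} (h : r = r') (k : Fin r → ℕ) (k' : Fin r' → ℕ)
    (hk : ∀ i : Fin r', k (Fin.cast h.symm i) = k' i) (z : ℝ) : LiF k z = LiF k' z := by
  subst h
  have : k = k' := funext fun i => by simpa using hk i
  rw [this]

lemma LiL_concat (l : List ℕ) (s : ℕ) (z : ℝ) :
    LiL (l ++ [s]) z = LiF (sf (fun i => l.get i) s) z := by
  unfold LiL
  refine LiF_congr (by simp) _ _ (fun i => ?_) z
  by_cases h : (i : ℕ) < l.length
  · rw [sf_lt _ _ i h]
    simp only [List.get_eq_getElem, Fin.coe_cast]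
    exact List.getElem_append_left h
  · have hi : (i : ℕ) = l.length := by have := i.isLt; omega
    have h2 : sf (fun i => l.get i) s i = s := by unfold sf; rw [dif_neg h]
    rw [h2]
    simp only [List.get_eq_getElem, Fin.coe_cast]
    exact List.getElem_concat_length hi _

lemma LiL_nil (z : ℝ) : LiL [] z = 1 := by
  unfold LiL
  show LiF (fun i : Fin 0 => ([] : List ℕ).get i) z = 1
  rw [LiF_eq]
  have h : ∀ m : Incr 0, z ^ lastv m / ∏ i, (m.1 i : ℝ) ^ ([] : List ℕ).get i = 1 := by
    intro m
    have h1 : lastv m = 0 := by unfold lastv; rw [dif_neg (lt_irrefl 0)]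
    rw [h1]
    simp
  rw [tsum_congr h]
  rw [tsum_eq_single default (fun b hb => absurd (Subsingleton.elim b default) hb)]

def oneEquiv : ℕ ≃ Incr 1 where
  toFun n := ⟨fun _ => n + 1,
    fun a b hab => (lt_irrefl a (by rwa [Subsingleton.elim b a] at hab)).elim,
    fun _ => Nat.succ_pos n⟩
  invFun m := m.1 0 - 1
  left_inv n := by simp
  right_inv m := Subtype.ext (funext fun i => by
    have h1 : 0 < m.1 0 := m.2.2 0
    have h2 : i = 0 := Subsingleton.elim _ _
    subst h2
    show m.1 0 - 1 + 1 = m.1 0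
    omega)

lemma lastv_oneEquiv (n : ℕ) : lastv (oneEquiv n) = n + 1 := by
  unfold lastv
  rw [dif_pos one_pos]
  rfl

lemma LiL_single (s : ℕ) (z : ℝ) :
    LiL [s] z = ∑' n : ℕ, z ^ (n+1) / ((n:ℝ)+1) ^ s := by
  unfold LiL
  show LiF (fun i : Fin 1 => [s].get i) z = _
  rw [LiF_eq, ← oneEquiv.tsum_eq]
  refine tsum_congr fun n => ?_
  rw [lastv_oneEquiv]
  congr 1
  rw [Fin.prod_univ_one]
  show ((n+1 : ℕ) : ℝ) ^ s = ((n:ℝ)+1) ^ s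
  push_cast
  rfl

lemma mzvL_single (s : ℕ) :
    mzvL [s] = ∑' n : ℕ, 1 / ((n:ℝ)+1) ^ s := by
  unfold mzvL
  show (∑' m : Incr 1, 1 / ∏ i : Fin 1, (m.1 i : ℝ) ^ [s].get i) = _
  rw [← oneEquiv.tsum_eq]
  refine tsum_congr fun n => ?_
  congr 1
  rw [Fin.prod_univ_one]
  show ((n+1 : ℕ) : ℝ) ^ s = ((n:ℝ)+1) ^ s
  push_cast
  rfl


lemma hasDerivAt_LiL_one (l : List ℕ) {z : ℝ} (h0 : 0 ≤ z) (h1 : z < 1) :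
    HasDerivAt (LiL (l ++ [1])) (LiL l z / (1 - z)) z := by
  have h := hasDerivAt_LiF_sf_one (fun i => l.get i) h0 h1
  have hfun : LiL (l ++ [1]) = LiF (sf (fun i => l.get i) 1) :=
    funext fun w => LiL_concat l 1 w
  rw [hfun]
  exact h

lemma hasDerivAt_LiL_ge (l : List ℕ) {s : ℕ} (hs : 1 ≤ s) {z : ℝ} (h0 : 0 < z) (h1 : z < 1) :
    HasDerivAt (LiL (l ++ [s])) (LiL (l ++ [s-1]) z / z) z := by
  have h := hasDerivAt_LiF_sf_ge (fun i => l.get i) hs h0 h1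
  have hfun : LiL (l ++ [s]) = LiF (sf (fun i => l.get i) s) :=
    funext fun w => LiL_concat l s w
  rw [hfun, LiL_concat l (s-1) z]
  exact h

lemma LiL_nonneg (k : List ℕ) {z : ℝ} (h0 : 0 ≤ z) : 0 ≤ LiL k z := by
  unfold LiL
  rw [LiF_eq]
  exact tsum_nonneg fun m => div_nonneg (pow_nonneg h0 _) (prod_pos _ m).le

lemma LiL_le_pow_mul (k : List ℕ) (hk : 0 < k.length) {z : ℝ} (h0 : 0 ≤ z) (hz : z ≤ 1/2) :
    LiL k z ≤ (2*z) ^ k.length * LiL k (1/2) := by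
  have h2z0 : 0 ≤ 2*z := by linarith
  unfold LiL
  rw [LiF_eq, LiF_eq, ← tsum_mul_left]
  set r := k.length
  have key : ∀ L, r ≤ L → z ^ L ≤ (2*z)^r * (1/2:ℝ)^L := by
    intro L hL
    obtain ⟨d, rfl⟩ : ∃ d, L = r + d := ⟨L - r, by omega⟩
    rw [pow_add, pow_add, mul_pow]
    have h2 : (2:ℝ)^r * (1/2:ℝ)^r = 1 := by
      rw [← mul_pow]
      norm_num
    calc z^r * z^d ≤ z^r * (1/2)^d :=
          mul_le_mul_of_nonneg_left (pow_le_pow_left₀ h0 hz d) (pow_nonneg h0 r)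
      _ = (2^r * (1/2:ℝ)^r) * (z^r * (1/2)^d) := by rw [h2, one_mul]
      _ = 2^r * z^r * ((1/2)^r * (1/2)^d) := by ring
  refine Summable.tsum_le_tsum (fun m => ?_)
    (summable_LiF_terms _ (by rw [abs_of_nonneg h0]; linarith))
    (Summable.mul_left _ (summable_LiF_terms _
      (by rw [abs_of_pos (by norm_num : (0:ℝ) < 1/2)]; norm_num)))
  have hP : (0:ℝ) < ∏ i, (m.1 i : ℝ) ^ k.get i := prod_pos _ m
  rw [mul_div_assoc']
  exact (div_le_div_iff_of_pos_right hP).2 (key (lastv m) (le_lastv hk m))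

lemma tendsto_LiL_zero (k : List ℕ) (hk : 0 < k.length) :
    Tendsto (fun z => LiL k z) (𝓝[>] (0:ℝ)) (𝓝 0) := by
  have hub : Tendsto (fun z : ℝ => (2*z)^k.length * LiL k (1/2)) (𝓝[>] (0:ℝ)) (𝓝 0) := by
    have hc : Continuous (fun z : ℝ => (2*z)^k.length * LiL k (1/2)) := by continuity
    have h0 : (2*(0:ℝ))^k.length * LiL k (1/2) = 0 := by
      simp [zero_pow (by omega : k.length ≠ 0)]
    have htd := hc.tendsto 0
    rw [h0] at htd
    exact htd.mono_left nhdsWithin_le_nhds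
  refine squeeze_zero' ?_ ?_ hub
  · filter_upwards [Ioo_mem_nhdsGT_of_mem (show (0:ℝ) ∈ Set.Ico (0:ℝ) (1/2) by norm_num)]
      with w hw
    exact LiL_nonneg k hw.1.le
  · filter_upwards [Ioo_mem_nhdsGT_of_mem (show (0:ℝ) ∈ Set.Ico (0:ℝ) (1/2) by norm_num)]
      with w hw
    exact LiL_le_pow_mul k hk hw.1.le hw.2.le

lemma tendsto_log_LiL_zero (k : List ℕ) (hk : 0 < k.length) :
    Tendsto (fun z => Real.log z * LiL k z) (𝓝[>] (0:ℝ)) (𝓝 0) := by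
  have hC0 : 0 ≤ LiL k (1/2) := LiL_nonneg k (by norm_num)
  set C := LiL k (1/2) with hC
  have hlog : Tendsto (fun z : ℝ => Real.log z * z) (𝓝[>] (0:ℝ)) (𝓝 0) := by
    have h := tendsto_log_mul_rpow_nhdsGT_zero one_pos
    refine h.congr' ?_
    filter_upwards [self_mem_nhdsWithin] with w _
    rw [Real.rpow_one]
  have hg : Tendsto (fun z : ℝ => (2*C) * |Real.log z * z|) (𝓝[>] (0:ℝ)) (𝓝 0) := by
    have := (hlog.abs).const_mul (2*C)
    simpa using this
  refine squeeze_zero_norm' ?_ hg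
  filter_upwards [Ioo_mem_nhdsGT_of_mem (show (0:ℝ) ∈ Set.Ico (0:ℝ) (1/2) by norm_num)]
    with w hw
  have hw0 : 0 < w := hw.1
  have hw2 : w ≤ 1/2 := hw.2.le
  have h2w : 2*w ≤ 1 := by linarith
  have h2w0 : 0 ≤ 2*w := by linarith
  have hLi : LiL k w ≤ (2*w) * C := by
    have h1 := LiL_le_pow_mul k hk hw0.le hw2
    have h2 : (2*w)^k.length ≤ 2*w := by
      calc (2*w)^k.length ≤ (2*w)^1 := pow_le_pow_of_le_one h2w0 h2w (by omega)
        _ = 2*w := pow_one _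
    calc LiL k w ≤ (2*w)^k.length * C := h1
      _ ≤ (2*w) * C := mul_le_mul_of_nonneg_right h2 hC0
  have hLi0 : 0 ≤ LiL k w := LiL_nonneg k hw0.le
  rw [Real.norm_eq_abs, abs_mul, abs_of_nonneg hLi0]
  calc |Real.log w| * LiL k w ≤ |Real.log w| * ((2*w)*C) :=
        mul_le_mul_of_nonneg_left hLi (abs_nonneg _)
    _ = (2*C) * (|Real.log w| * w) := by ring
    _ = (2*C) * |Real.log w * w| := by rw [abs_mul, abs_of_pos hw0]

lemma summable_one_div_nat_succ_pow (s : ℕ) (hs : 2 ≤ s) :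
    Summable (fun n : ℕ => 1 / ((n:ℝ)+1) ^ s) := by
  have h1 : Summable (fun n : ℕ => 1 / (n:ℝ) ^ s) := by
    rw [Real.summable_one_div_nat_pow]
    omega
  have h2 := (summable_nat_add_iff 1).2 h1
  refine h2.congr fun n => ?_
  push_cast
  ring_nf

lemma tendsto_LiL_single (s : ℕ) (hs : 2 ≤ s) :
    Tendsto (fun z => LiL [s] (1 - z)) (𝓝[>] (0:ℝ)) (𝓝 (mzvL [s])) := by
  rw [mzvL_single]
  have hsum := summable_one_div_nat_succ_pow s hs
  have hmain := tendsto_tsum_of_dominated_convergence (𝓕 := 𝓝[>] (0:ℝ))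
    (f := fun (z : ℝ) (n : ℕ) => (1-z)^(n+1)/((n:ℝ)+1)^s) (g := fun (n : ℕ) => 1/((n:ℝ)+1)^s)
    (bound := fun (n : ℕ) => 1/((n:ℝ)+1)^s) hsum ?_ ?_
  · refine hmain.congr fun z => ?_
    exact (LiL_single s (1-z)).symm
  · intro n
    have hc : Continuous (fun z : ℝ => (1-z)^(n+1)/((n:ℝ)+1)^s) :=
      (continuous_const.sub continuous_id).pow (n+1) |>.div_const _
    have h0 : (1-(0:ℝ))^(n+1)/((n:ℝ)+1)^s = 1/((n:ℝ)+1)^s := by norm_num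
    have htd := hc.tendsto 0
    rw [h0] at htd
    exact htd.mono_left nhdsWithin_le_nhds
  · filter_upwards [Ioo_mem_nhdsGT_of_mem (show (0:ℝ) ∈ Set.Ico (0:ℝ) 1 by norm_num)]
      with w hw n
    have h1 : |1 - w| ≤ 1 := by rw [abs_le]; constructor <;> [linarith [hw.2]; linarith [hw.1]]
    have hd : (0:ℝ) < ((n:ℝ)+1)^s := by positivity
    rw [Real.norm_eq_abs, abs_div, abs_pow, abs_of_pos hd]
    exact (div_le_div_iff_of_pos_right hd).2 (pow_le_one₀ (abs_nonneg _) h1)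

lemma const_of_hasDerivAt_zero {f : ℝ → ℝ} (hf : ∀ w ∈ Set.Ioo (0:ℝ) 1, HasDerivAt f 0 w)
    {x y : ℝ} (hx : x ∈ Set.Ioo (0:ℝ) 1) (hy : y ∈ Set.Ioo (0:ℝ) 1) : f x = f y := by
  have key : ∀ a b : ℝ, a ∈ Set.Ioo (0:ℝ) 1 → b ∈ Set.Ioo (0:ℝ) 1 → a ≤ b → f b = f a := by
    intro a b ha hb hab
    have hsub : Set.Icc a b ⊆ Set.Ioo (0:ℝ) 1 :=
      fun w hw => ⟨lt_of_lt_of_le ha.1 hw.1, lt_of_le_of_lt hw.2 hb.2⟩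
    have hdiff : DifferentiableOn ℝ f (Set.Icc a b) :=
      fun w hw => ((hf w (hsub hw)).differentiableAt).differentiableWithinAt
    have hderiv : ∀ w ∈ Set.Ico a b, derivWithin f (Set.Icc a b) w = 0 := by
      intro w hw
      have hab' : a < b := lt_of_le_of_lt hw.1 hw.2
      have hD := hf w (hsub ⟨hw.1, hw.2.le⟩)
      exact hD.hasDerivWithinAt.derivWithin (uniqueDiffOn_Icc hab' w ⟨hw.1, hw.2.le⟩)
    exact constant_of_derivWithin_zero hdiff hderiv b (Set.right_mem_Icc.2 hab)
  rcases le_total x y with h | h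
  · exact (key x y hx hy h).symm
  · exact key y x hy hx h

lemma eq_zero_of_const_of_tendsto {f : ℝ → ℝ}
    (hconst : ∀ x ∈ Set.Ioo (0:ℝ) 1, ∀ y ∈ Set.Ioo (0:ℝ) 1, f x = f y)
    (hlim : Tendsto f (𝓝[>] (0:ℝ)) (𝓝 0)) {z : ℝ} (hz : z ∈ Set.Ioo (0:ℝ) 1) : f z = 0 := by
  have hev : ∀ᶠ w in 𝓝[>] (0:ℝ), f w = f z := by
    filter_upwards [Ioo_mem_nhdsGT_of_mem (show (0:ℝ) ∈ Set.Ico (0:ℝ) 1 by norm_num)]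
      with w hw
    exact hconst w hw z hz
  have h2 : Tendsto f (𝓝[>] (0:ℝ)) (𝓝 (f z)) := by
    rw [tendsto_congr' hev]
    exact tendsto_const_nhds
  exact tendsto_nhds_unique h2 hlim


def rep (n : ℕ) : List ℕ := List.replicate n 1

lemma rep_succ (n : ℕ) : rep (n+1) = rep n ++ [1] := by
  unfold rep
  rw [← List.replicate_succ']

lemma rep_length (n : ℕ) : (rep n).length = n := List.length_replicate

noncomputable def RHS (k : ℕ) (z : ℝ) : ℝ :=
  (-1 : ℝ) ^ (k - 1) *
      ∑ i ∈ Finset.Icc 1 (k - 1), LiL (rep (i - 1) ++ [2] ++ rep (k - 1 - i)) z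
    + ∑ j ∈ Finset.range (k - 1), (-1 : ℝ) ^ j * mzvL [k - j] * LiL (rep j) z
    - (-1 : ℝ) ^ (k - 1) * Real.log z * LiL (rep (k - 1)) z

lemma hasDerivAt_SA {k : ℕ} (hk : 1 ≤ k) {z : ℝ} (hz0 : 0 < z) (hz1 : z < 1) :
    HasDerivAt (fun w => ∑ i ∈ Finset.Icc 1 k, LiL (rep (i-1) ++ [2] ++ rep (k-i)) w)
      ((∑ i ∈ Finset.Icc 1 (k-1), LiL (rep (i-1) ++ [2] ++ rep (k-1-i)) z) / (1-z)
        + LiL (rep k) z / z) z := by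
  have hsplit : Finset.Icc 1 k = insert k (Finset.Icc 1 (k-1)) := by
    ext x
    simp only [Finset.mem_Icc, Finset.mem_insert]
    omega
  have hknot : k ∉ Finset.Icc 1 (k-1) := by
    simp only [Finset.mem_Icc]
    omega
  have hterm : ∀ i ∈ Finset.Icc 1 (k-1),
      HasDerivAt (fun w => LiL (rep (i-1) ++ [2] ++ rep (k-i)) w)
        (LiL (rep (i-1) ++ [2] ++ rep (k-1-i)) z / (1-z)) z := by
    intro i hi
    rw [Finset.mem_Icc] at hi
    have hlist : rep (i-1) ++ [2] ++ rep (k-i) = (rep (i-1) ++ [2] ++ rep (k-1-i)) ++ [1] := by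
      rw [show k - i = (k-1-i) + 1 by omega, rep_succ, ← List.append_assoc]
    rw [hlist]
    exact hasDerivAt_LiL_one _ hz0.le hz1
  have hlast : HasDerivAt (fun w => LiL (rep (k-1) ++ [2] ++ rep (k-k)) w)
      (LiL (rep k) z / z) z := by
    have h0 : rep (k - k) = [] := by rw [show k - k = 0 by omega]; rfl
    rw [h0, List.append_nil]
    have h2 := hasDerivAt_LiL_ge (rep (k-1)) (show 1 ≤ 2 by omega) hz0 hz1
    have h3 : rep (k-1) ++ [2-1] = rep k := by
      show rep (k-1) ++ [1] = rep k
      rw [← rep_succ]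
      congr 1
      omega
    rwa [h3] at h2
  have hsum := HasDerivAt.fun_sum hterm
  have hadd := hlast.fun_add hsum
  have hfun : (fun w => ∑ i ∈ Finset.Icc 1 k, LiL (rep (i-1) ++ [2] ++ rep (k-i)) w)
      = (fun w => LiL (rep (k-1) ++ [2] ++ rep (k-k)) w
          + ∑ i ∈ Finset.Icc 1 (k-1), LiL (rep (i-1) ++ [2] ++ rep (k-i)) w) :=
    funext fun w => by rw [hsplit, Finset.sum_insert hknot]
  rw [hfun, Finset.sum_div, add_comm]
  exact hadd

lemma hasDerivAt_SB {k K : ℕ} (hk : 1 ≤ k) {z : ℝ} (hz0 : 0 < z) (hz1 : z < 1) :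
    HasDerivAt (fun w => ∑ j ∈ Finset.range k, (-1:ℝ)^j * mzvL [K - j] * LiL (rep j) w)
      (∑ j ∈ Finset.range k,
        (if j = 0 then 0 else (-1:ℝ)^j * mzvL [K - j] * (LiL (rep (j-1)) z / (1-z)))) z := by
  refine HasDerivAt.fun_sum fun j _ => ?_
  by_cases hj : j = 0
  · subst hj
    rw [if_pos rfl]
    have hfun : (fun w => (-1:ℝ)^0 * mzvL [K - 0] * LiL (rep 0) w)
        = fun _ => (-1:ℝ)^0 * mzvL [K - 0] * 1 :=
      funext fun w => by rw [show rep 0 = ([] : List ℕ) from rfl, LiL_nil]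
    rw [hfun]
    exact hasDerivAt_const _ _
  · rw [if_neg hj]
    have hlist : rep j = rep (j-1) ++ [1] := by
      rw [← rep_succ]
      congr 1
      omega
    rw [hlist]
    exact (hasDerivAt_LiL_one _ hz0.le hz1).const_mul _

lemma hasDerivAt_SC {k : ℕ} (hk : 1 ≤ k) {z : ℝ} (hz0 : 0 < z) (hz1 : z < 1) :
    HasDerivAt (fun w => (-1:ℝ)^k * Real.log w * LiL (rep k) w)
      ((-1:ℝ)^k * (z⁻¹ * LiL (rep k) z + Real.log z * (LiL (rep (k-1)) z / (1-z)))) z := by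
  have hlist : rep k = rep (k-1) ++ [1] := by
    rw [← rep_succ]
    congr 1
    omega
  have hlog := Real.hasDerivAt_log (ne_of_gt hz0)
  have hLi : HasDerivAt (LiL (rep k)) (LiL (rep (k-1)) z / (1-z)) z := by
    rw [hlist]
    exact hasDerivAt_LiL_one _ hz0.le hz1
  have hmul := hlog.fun_mul hLi
  have hfinal := hmul.const_mul ((-1:ℝ)^k)
  have hfun : (fun w => (-1:ℝ)^k * (Real.log w * LiL (rep k) w))
      = fun w => (-1:ℝ)^k * Real.log w * LiL (rep k) w := funext fun w => by ring
  rwa [hfun] at hfinal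


lemma hasDerivAt_RHS {k : ℕ} (hk : 1 ≤ k) {z : ℝ} (hz0 : 0 < z) (hz1 : z < 1) :
    HasDerivAt (RHS (k+1)) (-(RHS k z) / (1-z)) z := by
  have hz' : (1:ℝ) - z ≠ 0 := by intro h; linarith [h]
  have hSA := hasDerivAt_SA hk hz0 hz1
  have hSB := hasDerivAt_SB (K := k+1) hk hz0 hz1
  have hSC := hasDerivAt_SC hk hz0 hz1
  have hall := ((hSA.const_mul ((-1:ℝ)^k)).fun_add hSB).fun_sub hSC
  have hfun : (fun w => (-1:ℝ)^k * (∑ i ∈ Finset.Icc 1 k, LiL (rep (i-1) ++ [2] ++ rep (k-i)) w)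
      + ∑ j ∈ Finset.range k, (-1:ℝ)^j * mzvL [k+1-j] * LiL (rep j) w
      - (-1:ℝ)^k * Real.log w * LiL (rep k) w) = RHS (k+1) := by
    funext w
    unfold RHS
    simp only [Nat.add_sub_cancel]
  rw [hfun] at hall
  refine hall.congr_deriv ?_
  symm
  have hDB : (∑ j ∈ Finset.range k,
        (if j = 0 then 0 else (-1:ℝ)^j * mzvL [k+1-j] * (LiL (rep (j-1)) z / (1-z))))
      = -(∑ j ∈ Finset.range (k-1), (-1:ℝ)^j * mzvL [k-j] * LiL (rep j) z) / (1-z) := by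
    have hsplit : k = (k-1)+1 := by omega
    conv_lhs => rw [hsplit]
    rw [Finset.sum_range_succ']
    rw [if_pos rfl, add_zero, ← hsplit]
    have hterm : ∀ j ∈ Finset.range (k-1),
        (if j+1 = 0 then (0:ℝ) else (-1:ℝ)^(j+1) * mzvL [k+1-(j+1)] * (LiL (rep (j+1-1)) z / (1-z)))
          = -((-1:ℝ)^j * mzvL [k-j] * LiL (rep j) z / (1-z)) := by
      intro j _
      rw [if_neg (by omega), Nat.add_sub_cancel, show k+1-(j+1) = k-j by omega, pow_succ]
      ring
    rw [Finset.sum_congr rfl hterm]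
    rw [Finset.sum_neg_distrib, ← Finset.sum_div]
    rw [neg_div]
  rw [hDB]
  unfold RHS
  have he : (-1:ℝ)^k = -(-1:ℝ)^(k-1) := by
    have hsplit : k = (k-1)+1 := by omega
    conv_lhs => rw [hsplit]
    rw [pow_succ]
    ring
  rw [he]
  field_simp
  ring

lemma tendsto_RHS (k : ℕ) (hk : 1 ≤ k) :
    Tendsto (fun z => RHS (k+1) z) (𝓝[>] (0:ℝ)) (𝓝 (mzvL [k+1])) := by
  unfold RHS
  simp only [Nat.add_sub_cancel]
  have hA : Tendsto (fun z => (-1:ℝ)^k *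
      ∑ i ∈ Finset.Icc 1 k, LiL (rep (i-1) ++ [2] ++ rep (k-i)) z) (𝓝[>] (0:ℝ)) (𝓝 0) := by
    have hsum : Tendsto (fun z => ∑ i ∈ Finset.Icc 1 k,
        LiL (rep (i-1) ++ [2] ++ rep (k-i)) z) (𝓝[>] (0:ℝ)) (𝓝 0) := by
      have := tendsto_finset_sum (Finset.Icc 1 k)
        (fun i _ => tendsto_LiL_zero (rep (i-1) ++ [2] ++ rep (k-i))
          (by simp [rep, List.length_append]))
      simpa using this
    have := hsum.const_mul ((-1:ℝ)^k)
    simpa using this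
  have hB : Tendsto (fun z => ∑ j ∈ Finset.range k, (-1:ℝ)^j * mzvL [k+1-j] * LiL (rep j) z)
      (𝓝[>] (0:ℝ)) (𝓝 (mzvL [k+1])) := by
    have hterm : ∀ j ∈ Finset.range k,
        Tendsto (fun z => (-1:ℝ)^j * mzvL [k+1-j] * LiL (rep j) z) (𝓝[>] (0:ℝ))
          (𝓝 (if j = 0 then mzvL [k+1] else 0)) := by
      intro j _
      by_cases h0 : j = 0
      · subst h0
        have hfun : (fun z => (-1:ℝ)^0 * mzvL [k+1-0] * LiL (rep 0) z)
            = fun _ => mzvL [k+1] := funext fun z => by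
          rw [show rep 0 = ([] : List ℕ) from rfl, LiL_nil]
          norm_num
        rw [if_pos rfl, hfun]
        exact tendsto_const_nhds
      · rw [if_neg h0]
        have := (tendsto_LiL_zero (rep j) (by simp [rep]; omega)).const_mul
          ((-1:ℝ)^j * mzvL [k+1-j])
        simpa [mul_assoc] using this
    have := tendsto_finset_sum (Finset.range k) hterm
    have hval : (∑ j ∈ Finset.range k, (if j = 0 then mzvL [k+1] else 0)) = mzvL [k+1] := by
      rw [Finset.sum_ite_eq' (Finset.range k) 0 (fun _ => mzvL [k+1])]
      rw [if_pos (Finset.mem_range.2 (by omega))]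
    rwa [hval] at this
  have hC : Tendsto (fun z => (-1:ℝ)^k * Real.log z * LiL (rep k) z) (𝓝[>] (0:ℝ)) (𝓝 0) := by
    have := (tendsto_log_LiL_zero (rep k) (by simp [rep]; omega)).const_mul ((-1:ℝ)^k)
    have hfun : (fun z => (-1:ℝ)^k * (Real.log z * LiL (rep k) z))
        = fun z => (-1:ℝ)^k * Real.log z * LiL (rep k) z := funext fun z => by ring
    rw [hfun] at this
    simpa using this
  have := (hA.add hB).sub hC
  simpa using this

lemma main_eq : ∀ k : ℕ, 1 ≤ k → ∀ z ∈ Set.Ioo (0:ℝ) 1, LiL [k] (1-z) = RHS k z := by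
  intro k
  induction k with
  | zero => intro h; exact absurd h (by omega)
  | succ k ih =>
    intro _ z hz
    by_cases hk0 : k = 0
    · subst hk0
      obtain ⟨hz0, hz1⟩ := hz
      unfold RHS
      rw [show (0+1 : ℕ) - 1 = 0 from rfl]
      rw [Finset.Icc_eq_empty (by omega), Finset.range_zero, Finset.sum_empty, Finset.sum_empty]
      rw [show rep 0 = ([] : List ℕ) from rfl, LiL_nil]
      rw [show (0+1 : ℕ) = 1 from rfl, LiL_single]
      have habs : |1 - z| < 1 := by
        rw [abs_lt]
        constructor <;> linarith
      have hh := (Real.hasSum_pow_div_log_of_abs_lt_one habs).tsum_eq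
      simp only [sub_sub_cancel] at hh
      rw [show (∑' n : ℕ, (1-z)^(n+1)/((n:ℝ)+1)^1) = ∑' n : ℕ, (1-z)^(n+1)/((n:ℝ)+1) from
        tsum_congr fun n => by rw [pow_one]]
      rw [hh]
      ring
    · have hk : 1 ≤ k := by omega
      have hderiv : ∀ w ∈ Set.Ioo (0:ℝ) 1,
          HasDerivAt (fun w => LiL [k+1] (1-w) - RHS (k+1) w) 0 w := by
        intro w hw
        obtain ⟨hw0, hw1⟩ := hw
        have hw1' : 0 < 1 - w := by linarith
        have hw1'' : 1 - w < 1 := by linarith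
        have hbase := hasDerivAt_LiL_ge ([] : List ℕ) (show 1 ≤ k+1 by omega) hw1' hw1''
        rw [List.nil_append, List.nil_append, Nat.add_sub_cancel] at hbase
        have hinner : HasDerivAt (fun w : ℝ => 1 - w) (-1) w := (hasDerivAt_id w).const_sub 1
        have hL := hbase.comp w hinner
        have hR := hasDerivAt_RHS hk hw0 hw1
        have hsub := hL.sub hR
        have hIH := ih hk w ⟨hw0, hw1⟩
        have hval : LiL [k] (1-w)/(1-w) * (-1) - (-(RHS k w)/(1-w)) = 0 := by
          rw [← hIH]
          field_simp
          ring
        rw [hval] at hsub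
        exact hsub
      have hlim : Tendsto (fun w => LiL [k+1] (1-w) - RHS (k+1) w) (𝓝[>] (0:ℝ)) (𝓝 0) := by
        have h1 := tendsto_LiL_single (k+1) (by omega)
        have h2 := tendsto_RHS k hk
        have := h1.sub h2
        simpa using this
      have hconst : ∀ x ∈ Set.Ioo (0:ℝ) 1, ∀ y ∈ Set.Ioo (0:ℝ) 1,
          (fun w => LiL [k+1] (1-w) - RHS (k+1) w) x
            = (fun w => LiL [k+1] (1-w) - RHS (k+1) w) y :=
        fun x hx y hy => const_of_hasDerivAt_zero hderiv hx hy
      have hzero := eq_zero_of_const_of_tendsto hconst hlim hz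
      have h : LiL [k+1] (1-z) - RHS (k+1) z = 0 := hzero
      linarith

end Aux

end Aux

/-- Functional equation for the depth-one polylogarithm, `k ≥ 2`, `0 < z < 1`. -/
theorem stmt11 (k : ℕ) (hk : 2 ≤ k) (z : ℝ) (hz0 : 0 < z) (hz1 : z < 1) :
    LiL [k] (1 - z)
      = (-1 : ℝ) ^ (k - 1) *
          ∑ i ∈ Finset.Icc 1 (k - 1),
            LiL (List.replicate (i - 1) 1 ++ [2] ++ List.replicate (k - 1 - i) 1) z
        + ∑ j ∈ Finset.range (k - 1),
            (-1 : ℝ) ^ j * mzvL [k - j] * LiL (List.replicate j 1) z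
        - (-1 : ℝ) ^ (k - 1) * Real.log z * LiL (List.replicate (k - 1) 1) z := by
  have h := Aux.main_eq k (by omega) z ⟨hz0, hz1⟩
  unfold Aux.RHS Aux.rep at h
  exact h

end MZVPaper
end

section
/- Functional equation for the dilogarithm as the depth-one case: for 0 < z < 1, Li(2;1−z) = ζ(2) − Li(1;z)·Li(1;1−z) − Li(2;z), where Li(1;z) = −log(1−z) and Li(2;z) = ∑_{m≥1} z^m/m^2. -/
open scoped BigOperators

namespace MZVPaper

open Real Filter Set

def e1 : ℕ ≃ Incr 1 where
  toFun n := ⟨fun _ => n + 1, fun a b h => absurd (Subsingleton.elim a b) h.ne,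
    fun _ => Nat.succ_pos n⟩
  invFun m := m.1 0 - 1
  left_inv n := rfl
  right_inv m := Subtype.ext (funext fun i => by
    rw [Subsingleton.elim i 0]
    exact Nat.succ_pred_eq_of_pos (m.2.2 0))

lemma liL_single (k : ℕ) (z : ℝ) :
    LiL [k] z = ∑' n : ℕ, z ^ (n + 1) / ((n : ℝ) + 1) ^ k := by
  rw [LiL, LiF]
  simp only [List.length_singleton]
  rw [← e1.tsum_eq]
  congr 1
  funext n
  simp [show ∀ n (i : Fin 1), ((e1 n).1 i : ℕ) = n + 1 from fun _ _ => rfl, Fin.prod_univ_one]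

lemma hasSum_basel_shift : HasSum (fun n : ℕ => (1 : ℝ) / ((n : ℝ) + 1) ^ 2) (π ^ 2 / 6) := by
  have h2 : HasSum (fun n : ℕ => (1 : ℝ) / (((n + 1 : ℕ)) : ℝ) ^ 2) (π ^ 2 / 6) := by
    rw [hasSum_nat_add_iff (f := fun n : ℕ => (1 : ℝ) / (n : ℝ) ^ 2) 1]
    simpa using hasSum_zeta_two
  convert h2 using 2 with n
  push_cast; ring

lemma mzvL_two : mzvL [2] = π ^ 2 / 6 := by
  have h := hasSum_basel_shift
  rw [mzvL]
  simp only [List.length_singleton]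
  rw [← e1.tsum_eq]
  have : (fun n : ℕ => (1:ℝ) / ∏ i : Fin 1, ((e1 n).1 i : ℝ) ^ [2].get i)
      = fun n : ℕ => (1:ℝ) / ((n : ℝ) + 1) ^ 2 := by
    funext n; simp [show ∀ n (i : Fin 1), ((e1 n).1 i : ℕ) = n + 1 from fun _ _ => rfl, Fin.prod_univ_one]
  rw [this]
  exact h.tsum_eq


noncomputable def Li2 (z : ℝ) : ℝ := ∑' n : ℕ, z ^ (n + 1) / ((n : ℝ) + 1) ^ 2

lemma li2_hasDerivAt {z : ℝ} (hz : |z| < 1) :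
    HasDerivAt Li2 (∑' n : ℕ, z ^ n / ((n : ℝ) + 1)) z := by
  set r := (|z| + 1) / 2 with hr
  have habs := abs_nonneg z
  have hr0 : 0 ≤ r := by positivity
  have hr1 : r < 1 := by rw [hr]; linarith
  have hzr : |z| < r := by rw [hr]; linarith
  have hmem : z ∈ Ioo (-r) r := abs_lt.1 hzr
  refine hasDerivAt_tsum_of_isPreconnected (g' := fun (n : ℕ) (y : ℝ) => y ^ n / ((n : ℝ) + 1))
    (summable_geometric_of_lt_one hr0 hr1) isOpen_Ioo (convex_Ioo _ _).isPreconnected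
    (fun n y _ => by
      have h := (hasDerivAt_pow (n + 1) y).div_const (((n : ℝ) + 1) ^ 2)
      have hne : ((n : ℝ) + 1) ≠ 0 := by positivity
      convert h using 1
      rfl
      push_cast
      field_simp)
    (fun n y hy => by
      have hy' : |y| ≤ r := le_of_lt (abs_lt.2 ⟨hy.1, hy.2⟩)
      have h1 : |y ^ n / ((n : ℝ) + 1)| ≤ |y| ^ n := by
        rw [abs_div, abs_pow]
        have hn1 : (1 : ℝ) ≤ |(n : ℝ) + 1| := by
          rw [abs_of_pos (by positivity)]; linarith [Nat.cast_nonneg (α := ℝ) n]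
        calc |y| ^ n / |(n : ℝ) + 1| ≤ |y| ^ n / 1 :=
              div_le_div_of_nonneg_left (by positivity) one_pos hn1
          _ = |y| ^ n := div_one _
      calc ‖y ^ n / ((n : ℝ) + 1)‖ ≤ |y| ^ n := h1
        _ ≤ r ^ n := pow_le_pow_left₀ (abs_nonneg y) hy' n)
    (mem_Ioo.2 ⟨neg_neg_iff_pos.2 (lt_of_le_of_lt habs hzr), lt_of_le_of_lt habs hzr⟩)
    (by simpa using summable_zero)
    hmem

lemma li2_continuousOn : ContinuousOn Li2 (Icc (-1 : ℝ) 1) := by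
  have hb : ∀ (n : ℕ) (x : ℝ), x ∈ Icc (-1 : ℝ) 1 →
      ‖x ^ (n + 1) / ((n : ℝ) + 1) ^ 2‖ ≤ 1 / ((n : ℝ) + 1) ^ 2 := by
    intro n x hx
    have hx1 : |x| ≤ 1 := abs_le.2 ⟨hx.1, hx.2⟩
    rw [Real.norm_eq_abs, abs_div, abs_pow, abs_of_pos (show (0:ℝ) < ((n : ℝ) + 1) ^ 2 by positivity)]
    apply div_le_div_of_nonneg_right ?_ (by positivity)
    calc |x| ^ (n + 1) ≤ 1 ^ (n + 1) := pow_le_pow_left₀ (abs_nonneg x) hx1 _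
      _ = 1 := one_pow _
  have := tendstoUniformlyOn_tsum hasSum_basel_shift.summable hb
  exact this.continuousOn (Filter.Eventually.frequently (Filter.Eventually.of_forall fun N =>
    continuousOn_finset_sum _ fun n _ => (continuous_pow (n + 1)).continuousOn.div_const _))

lemma li2_one : Li2 1 = π ^ 2 / 6 := by
  rw [Li2]
  simp only [one_pow]
  exact hasSum_basel_shift.tsum_eq

lemma li2_zero : Li2 0 = 0 := by
  rw [Li2]
  convert tsum_zero with n
  simp

lemma tsum_deriv_eq {z : ℝ} (h0 : z ≠ 0) (hz : |z| < 1) :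
    ∑' n : ℕ, z ^ n / ((n : ℝ) + 1) = -Real.log (1 - z) / z := by
  have h := (Real.hasSum_pow_div_log_of_abs_lt_one hz).div_const z
  refine HasSum.tsum_eq ?_
  convert h using 2 with n
  rfl
  rw [pow_succ]
  field_simp



noncomputable def Fdl (y : ℝ) : ℝ := Li2 y + Li2 (1 - y) + Real.log y * Real.log (1 - y)

lemma fdl_hasDerivAt {z : ℝ} (h0 : 0 < z) (h1 : z < 1) : HasDerivAt Fdl 0 z := by
  have hz : |z| < 1 := abs_lt.2 ⟨by linarith, h1⟩
  have hz' : |1 - z| < 1 := abs_lt.2 ⟨by linarith, by linarith⟩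
  have hzne : z ≠ 0 := h0.ne'
  have h1zne : (1 : ℝ) - z ≠ 0 := by linarith
  have hinner : HasDerivAt (fun y : ℝ => 1 - y) (-1) z := by
    simpa using (hasDerivAt_id z).const_sub 1
  have hA : HasDerivAt Li2 (-Real.log (1 - z) / z) z := by
    have := li2_hasDerivAt hz
    rwa [tsum_deriv_eq hzne hz] at this
  have hB : HasDerivAt (fun y : ℝ => Li2 (1 - y)) (-Real.log z / (1 - z) * (-1)) z := by
    have hb := li2_hasDerivAt hz'
    rw [tsum_deriv_eq h1zne hz'] at hb
    have := hb.comp z hinner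
    simpa [Function.comp_def] using this
  have hC : HasDerivAt (fun y : ℝ => Real.log y * Real.log (1 - y))
      (z⁻¹ * Real.log (1 - z) + Real.log z * ((1 - z)⁻¹ * (-1))) z := by
    exact (Real.hasDerivAt_log hzne).mul ((Real.hasDerivAt_log h1zne).comp z hinner)
  have hF := (hA.add hB).add hC
  have : -Real.log (1 - z) / z + -Real.log z / (1 - z) * (-1) +
      (z⁻¹ * Real.log (1 - z) + Real.log z * ((1 - z)⁻¹ * (-1))) = 0 := by
    field_simp
    ring
  rw [this] at hF
  exact hF

lemma fdl_const {z : ℝ} (h0 : 0 < z) (h1 : z < 1) {y : ℝ} (hy0 : z ≤ y) (hy1 : y < 1) :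
    Fdl y = Fdl z := by
  have hderiv : ∀ x ∈ Ico z y, HasDerivWithinAt Fdl 0 (Ici x) x := fun x hx =>
    (fdl_hasDerivAt (h0.trans_le hx.1) (hx.2.trans hy1)).hasDerivWithinAt
  have hcont : ContinuousOn Fdl (Icc z y) := fun x hx =>
    ((fdl_hasDerivAt (lt_of_lt_of_le h0 hx.1) (lt_of_le_of_lt hx.2 hy1)).continuousAt).continuousWithinAt
  exact constant_of_has_deriv_right_zero hcont hderiv y (right_mem_Icc.2 hy0)

lemma log_mul_log_tendsto :
    Filter.Tendsto (fun t : ℝ => Real.log (1 - t) * Real.log t) (nhdsWithin 0 (Ioi 0)) (nhds 0) := by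
  have h1 : Filter.Tendsto (fun t : ℝ => Real.log (1 - t) / t) (nhdsWithin 0 (Ioi 0)) (nhds (-1)) := by
    have hd : HasDerivAt (fun t : ℝ => Real.log (1 - t)) (-1) 0 := by
      have := (Real.hasDerivAt_log (by norm_num : (1 : ℝ) - 0 ≠ 0)).comp 0
        (by simpa using (hasDerivAt_id (0:ℝ)).const_sub 1)
      simpa [Function.comp_def] using this
    have := hasDerivAt_iff_tendsto_slope.1 hd
    have hsub : nhdsWithin (0:ℝ) (Ioi 0) ≤ nhdsWithin 0 {(0:ℝ)}ᶜ :=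
      nhdsWithin_mono _ fun x hx => ne_of_gt hx
    have := this.mono_left hsub
    refine this.congr' ?_
    filter_upwards [self_mem_nhdsWithin] with t ht
    simp [slope_def_field, Real.log_one]
  have h2 : Filter.Tendsto (fun t : ℝ => Real.log t * t) (nhdsWithin 0 (Ioi 0)) (nhds 0) := by
    have := tendsto_log_mul_rpow_nhdsGT_zero one_pos
    simpa [Real.rpow_one] using this
  have hprod := h1.mul h2
  rw [show (-1 : ℝ) * 0 = 0 by ring] at hprod
  refine hprod.congr' ?_
  filter_upwards [self_mem_nhdsWithin] with t ht
  have htne : t ≠ 0 := ne_of_gt ht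
  field_simp



lemma key {z : ℝ} (h0 : 0 < z) (h1 : z < 1) :
    Li2 z + Li2 (1 - z) + Real.log z * Real.log (1 - z) = π ^ 2 / 6 := by
  set l := nhdsWithin (1 : ℝ) (Ioo z 1) with hl
  haveI hne : l.NeBot := by
    rw [hl]
    refine mem_closure_iff_nhdsWithin_neBot.mp ?_
    rw [closure_Ioo h1.ne]
    exact right_mem_Icc.2 h1.le
  have hmem : ∀ᶠ y in l, y ∈ Ioo z 1 := self_mem_nhdsWithin
  have htend1 : Filter.Tendsto (fun y : ℝ => y) l (nhds 1) :=
    tendsto_id.mono_left nhdsWithin_le_nhds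
  have hsub : Filter.Tendsto (fun y : ℝ => 1 - y) l (nhds 0) := by
    have := (tendsto_const_nhds (x := (1:ℝ)) (f := l)).sub htend1
    simpa using this
  have T1 : Filter.Tendsto Li2 l (nhds (π ^ 2 / 6)) := by
    have hc := li2_continuousOn.continuousWithinAt (right_mem_Icc.2 (by norm_num : (-1:ℝ) ≤ 1))
    rw [ContinuousWithinAt, li2_one] at hc
    exact hc.mono_left (nhdsWithin_mono _ (fun y hy => ⟨by linarith [hy.1], hy.2.le⟩))
  have T2 : Filter.Tendsto (fun y : ℝ => Li2 (1 - y)) l (nhds 0) := by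
    have hc := li2_continuousOn.continuousWithinAt
      (mem_Icc.2 ⟨by norm_num, by norm_num⟩ : (0:ℝ) ∈ Icc (-1:ℝ) 1)
    rw [ContinuousWithinAt, li2_zero] at hc
    refine hc.comp ?_
    refine tendsto_nhdsWithin_of_tendsto_nhds_of_eventually_within _ hsub ?_
    filter_upwards [hmem] with y hy
    exact mem_Icc.2 ⟨by linarith [hy.1, hy.2, h0], by linarith [hy.1, h0]⟩
  have T3 : Filter.Tendsto (fun y : ℝ => Real.log y * Real.log (1 - y)) l (nhds 0) := by
    have hmap : Filter.Tendsto (fun y : ℝ => 1 - y) l (nhdsWithin 0 (Ioi 0)) := by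
      refine tendsto_nhdsWithin_of_tendsto_nhds_of_eventually_within _ hsub ?_
      filter_upwards [hmem] with y hy
      exact sub_pos.2 hy.2
    have := log_mul_log_tendsto.comp hmap
    refine this.congr ?_
    intro y
    simp [sub_sub_cancel]
  have hT : Filter.Tendsto Fdl l (nhds (π ^ 2 / 6)) := by
    have := (T1.add T2).add T3
    rw [show Fdl = fun y => Li2 y + Li2 (1 - y) + Real.log y * Real.log (1 - y) from rfl]
    simpa using this
  have hconst : Filter.Tendsto Fdl l (nhds (Fdl z)) := by
    refine Filter.Tendsto.congr' ?_ tendsto_const_nhds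
    filter_upwards [hmem] with y hy
    exact (fdl_const h0 h1 hy.1.le hy.2).symm
  have := tendsto_nhds_unique hconst hT
  rw [← this, Fdl]



lemma liL_two_eq (y : ℝ) : LiL [2] y = Li2 y := liL_single 2 y

lemma liL_one_eq {y : ℝ} (hy : |y| < 1) : LiL [1] y = -Real.log (1 - y) := by
  rw [liL_single 1 y]
  refine HasSum.tsum_eq ?_
  have := Real.hasSum_pow_div_log_of_abs_lt_one hy
  convert this using 2 with n
  push_cast
  rw [pow_one]

/-- Dilogarithm functional equation:
`Li(2;1−z) = ζ(2) − Li(1;z)·Li(1;1−z) − Li(2;z)` for `0 < z < 1`. -/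
theorem stmt12 (z : ℝ) (hz0 : 0 < z) (hz1 : z < 1) :
    LiL [2] (1 - z) = mzvL [2] - LiL [1] z * LiL [1] (1 - z) - LiL [2] z := by
  have hz : |z| < 1 := abs_lt.2 ⟨by linarith, hz1⟩
  have hz' : |1 - z| < 1 := abs_lt.2 ⟨by linarith, by linarith⟩
  rw [liL_two_eq, liL_two_eq, liL_one_eq hz, liL_one_eq hz', mzvL_two]
  have hk := key hz0 hz1
  have h11 : (1 : ℝ) - (1 - z) = z := by ring
  rw [h11]
  nlinarith [hk]

end MZVPaper
end
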